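/- arXiv:math/0510273 — 6 statements merged into one kernel-verified Lean document; each statement's English description precedes it below -/
import Mathlib

section
/- For any distribution F on [0,∞) with unbounded support and any independent nonnegative-integer-valued stopping time τ with Eτ < ∞, the tail of the τ-fold convolution satisfies liminf_{x→∞} (1 - F^{*τ}(x)) / (1 - F(x)) ≥ Eτ. -/
open MeasureTheory Filter Real Set
open scoped ENNReal Topology

noncomputable section

/-- Convolution of two measures on ℝ: distribution of the sum of independent r.v.'s. -/
def mconv (μ ν : MeasureTheory.Measure ℝ) : MeasureTheory.Measure ℝ :=
  MeasureTheory.Measure.map (fun p : ℝ × ℝ => p.1 + p.2) (μ.prod ν)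

/-- The tail F̄(x) = F(x,∞). -/
def tail (F : MeasureTheory.Measure ℝ) (x : ℝ) : ℝ≥0∞ := F (Set.Ioi x)

/-- Laplace transform φ(γ) = ∫ e^{γx} F(dx), with value in [0,∞]. -/
def phi (F : MeasureTheory.Measure ℝ) (γ : ℝ) : ℝ≥0∞ :=
  ∫⁻ x, ENNReal.ofReal (Real.exp (γ * x)) ∂F

/-- F is heavy-tailed: φ(γ) = ∞ for every γ > 0. -/
def IsHeavyTailed (F : MeasureTheory.Measure ℝ) : Prop :=
  ∀ γ : ℝ, 0 < γ → phi F γ = ⊤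

/-- γ̂ = sup{γ : φ(γ) < ∞} ∈ [0,∞] (for distributions on [0,∞)). -/
def gammaHat (F : MeasureTheory.Measure ℝ) : ℝ≥0∞ :=
  sSup {p : ℝ≥0∞ | ∃ γ : ℝ, p = ENNReal.ofReal γ ∧ phi F γ < ⊤}

/-- φ(γ̂) = lim_{γ↑γ̂} φ(γ), realized (by monotonicity of φ) as sup over γ < γ̂. -/
def phiHat (F : MeasureTheory.Measure ℝ) : ℝ≥0∞ :=
  ⨆ (γ : ℝ) (_ : ENNReal.ofReal γ < gammaHat F ∨ γ < 0), phi F γ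

/-- n-fold convolution power of F (F^{*0} = δ₀). -/
def convPow (F : MeasureTheory.Measure ℝ) : ℕ → MeasureTheory.Measure ℝ
  | 0 => MeasureTheory.Measure.dirac 0
  | n + 1 => mconv (convPow F n) F

lemma measurable_addfun : Measurable (fun p : ℝ × ℝ => p.1 + p.2) :=
  measurable_fst.add measurable_snd

lemma mconv_apply (μ ν : MeasureTheory.Measure ℝ) [SFinite ν] {s : Set ℝ}
    (hs : MeasurableSet s) :
    mconv μ ν s = (μ.prod ν) ((fun p : ℝ × ℝ => p.1 + p.2) ⁻¹' s) :=
  MeasureTheory.Measure.map_apply measurable_addfun hs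

lemma convPow_prob (F : MeasureTheory.Measure ℝ) [IsProbabilityMeasure F] (n : ℕ) :
    IsProbabilityMeasure (convPow F n) := by
  induction n with
  | zero => exact MeasureTheory.Measure.dirac.isProbabilityMeasure
  | succ n ih =>
    haveI := ih
    exact MeasureTheory.Measure.isProbabilityMeasure_map measurable_addfun.aemeasurable

lemma convPow_Iio (F : MeasureTheory.Measure ℝ) [IsProbabilityMeasure F]
    (hsupp : F (Set.Iio 0) = 0) (n : ℕ) : convPow F n (Set.Iio 0) = 0 := by
  induction n with
  | zero =>
    simp [convPow, MeasureTheory.Measure.dirac_apply' _ measurableSet_Iio]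
  | succ n ih =>
    haveI := convPow_prob F n
    rw [convPow, mconv_apply _ _ measurableSet_Iio]
    refine measure_mono_null (fun p hp => ?_)
      (measure_union_null (s := Set.Iio 0 ×ˢ Set.univ) (t := Set.univ ×ˢ Set.Iio 0) ?_ ?_)
    · by_cases h1 : p.1 < 0
      · exact Or.inl ⟨h1, trivial⟩
      · simp only [Set.mem_preimage, Set.mem_Iio] at hp
        push_neg at h1
        exact Or.inr ⟨trivial, Set.mem_Iio.2 (by linarith)⟩
    · rw [MeasureTheory.Measure.prod_prod, ih, zero_mul]
    · rw [MeasureTheory.Measure.prod_prod, hsupp, mul_zero]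

lemma convPow_Iic_le (F : MeasureTheory.Measure ℝ) [IsProbabilityMeasure F]
    (hsupp : F (Set.Iio 0) = 0) (n : ℕ) (x : ℝ) :
    convPow F n (Set.Iic x) ≤ (F (Set.Iic x)) ^ n := by
  induction n with
  | zero =>
    rw [convPow, pow_zero]
    exact prob_le_one
  | succ n ih =>
    haveI := convPow_prob F n
    rw [convPow, mconv_apply _ _ measurableSet_Iic]
    have hsub : (fun p : ℝ × ℝ => p.1 + p.2) ⁻¹' Set.Iic x ⊆
        (Set.Iic x ×ˢ Set.Iic x) ∪ ((Set.Iio 0 ×ˢ Set.univ) ∪ (Set.univ ×ˢ Set.Iio 0)) := by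
      intro p hp
      simp only [Set.mem_preimage, Set.mem_Iic] at hp
      by_cases h1 : p.1 < 0
      · exact Or.inr (Or.inl ⟨h1, trivial⟩)
      · by_cases h2 : p.2 < 0
        · exact Or.inr (Or.inr ⟨trivial, h2⟩)
        · push_neg at h1 h2
          exact Or.inl ⟨Set.mem_Iic.2 (by linarith), Set.mem_Iic.2 (by linarith)⟩
    calc ((convPow F n).prod F) ((fun p : ℝ × ℝ => p.1 + p.2) ⁻¹' Set.Iic x)
        ≤ ((convPow F n).prod F) ((Set.Iic x ×ˢ Set.Iic x) ∪
            ((Set.Iio 0 ×ˢ Set.univ) ∪ (Set.univ ×ˢ Set.Iio 0))) := measure_mono hsub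
      _ ≤ ((convPow F n).prod F) (Set.Iic x ×ˢ Set.Iic x) +
            (((convPow F n).prod F) (Set.Iio 0 ×ˢ Set.univ) +
             ((convPow F n).prod F) (Set.univ ×ˢ Set.Iio 0)) :=
          le_trans (measure_union_le _ _) (add_le_add le_rfl (measure_union_le _ _))
      _ = convPow F n (Set.Iic x) * F (Set.Iic x) := by
          rw [MeasureTheory.Measure.prod_prod, MeasureTheory.Measure.prod_prod,
            MeasureTheory.Measure.prod_prod, convPow_Iio F hsupp n, hsupp]
          simp
      _ ≤ F (Set.Iic x) ^ n * F (Set.Iic x) :=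
          mul_le_mul_left ih _
      _ = F (Set.Iic x) ^ (n + 1) := (pow_succ _ _).symm

lemma real_key (n : ℕ) {t : ℝ} (h0 : 0 ≤ t) (h1 : t ≤ 1) :
    (n : ℝ) * t - (n : ℝ) ^ 2 * t ^ 2 ≤ 1 - (1 - t) ^ n := by
  induction n with
  | zero => simp
  | succ n ih =>
    have hb : 1 + (n : ℝ) * (-t) ≤ (1 - t) ^ n := by
      have := one_add_mul_le_pow (a := -t) (by linarith) n
      simpa [sub_eq_add_neg] using this
    have hnn : (0 : ℝ) ≤ (1 - t) ^ n := pow_nonneg (by linarith) n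
    have hmul : t * (1 + (n : ℝ) * (-t)) ≤ t * (1 - t) ^ n :=
      mul_le_mul_of_nonneg_left hb h0
    have hpow : (1 - t) ^ (n + 1) = (1 - t) ^ n - t * (1 - t) ^ n := by ring
    push_cast
    nlinarith [sq_nonneg t, sq_nonneg ((n : ℝ) * t)]

/-- Key probability bound: tail of n-fold convolution is at least n t - n² t². -/
lemma tail_convPow_ge (F : MeasureTheory.Measure ℝ) [IsProbabilityMeasure F]
    (hsupp : F (Set.Iio 0) = 0) (n : ℕ) (x : ℝ) :
    ENNReal.ofReal ((n : ℝ) * (tail F x).toReal - (n : ℝ) ^ 2 * (tail F x).toReal ^ 2)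
      ≤ tail (convPow F n) x := by
  haveI := convPow_prob F n
  set t : ℝ := (tail F x).toReal with ht
  have htail_ne : tail F x ≠ ⊤ := measure_ne_top F _
  have ht0 : 0 ≤ t := ENNReal.toReal_nonneg
  have ht1 : t ≤ 1 := by
    have : tail F x ≤ 1 := prob_le_one
    simpa [ht] using ENNReal.toReal_mono (by norm_num) this
  -- q = F (Iic x) = ofReal (1 - t)
  have hcompl : F (Set.Iic x) = 1 - tail F x := by
    have h := measure_compl (μ := F) (s := Set.Ioi x) measurableSet_Ioi (measure_ne_top F _)
    rw [Set.compl_Ioi] at h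
    simpa [tail, measure_univ] using h
  have hq : F (Set.Iic x) = ENNReal.ofReal (1 - t) := by
    rw [hcompl, ht, ← ENNReal.ofReal_one, ← ENNReal.ofReal_toReal htail_ne,
      ENNReal.ofReal_sub _ ENNReal.toReal_nonneg]
    simp
  have hIic : convPow F n (Set.Iic x) ≤ ENNReal.ofReal ((1 - t) ^ n) := by
    rw [ENNReal.ofReal_pow (by linarith), ← hq]
    exact convPow_Iic_le F hsupp n x
  have htailn : ENNReal.ofReal (1 - (1 - t) ^ n) ≤ tail (convPow F n) x := by
    have hc : tail (convPow F n) x = 1 - convPow F n (Set.Iic x) := by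
      have h := measure_compl (μ := convPow F n) (s := Set.Iic x) measurableSet_Iic
        (measure_ne_top _ _)
      rw [Set.compl_Iic] at h
      simpa [tail, measure_univ] using h
    rw [hc, ← ENNReal.ofReal_one, ENNReal.ofReal_sub _ (pow_nonneg (by linarith) n)]
    exact tsub_le_tsub le_rfl hIic
  exact le_trans (ENNReal.ofReal_le_ofReal (real_key n ht0 ht1)) htailn

lemma tail_div_ge (F : MeasureTheory.Measure ℝ) [IsProbabilityMeasure F]
    (hsupp : F (Set.Iio 0) = 0) (hub : ∀ x : ℝ, tail F x ≠ 0) (n : ℕ) (x : ℝ) :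
    ENNReal.ofReal ((n : ℝ) - (n : ℝ) ^ 2 * (tail F x).toReal)
      ≤ tail (convPow F n) x / tail F x := by
  set t : ℝ := (tail F x).toReal with ht
  have htail_ne : tail F x ≠ ⊤ := measure_ne_top F _
  rcases le_or_gt ((n : ℝ) - (n : ℝ) ^ 2 * t) 0 with h | h
  · simp [ENNReal.ofReal_eq_zero.2 h]
  · rw [ENNReal.le_div_iff_mul_le (Or.inl (hub x)) (Or.inl htail_ne)]
    have : ENNReal.ofReal ((n : ℝ) - (n : ℝ) ^ 2 * t) * tail F x
        = ENNReal.ofReal (((n : ℝ) - (n : ℝ) ^ 2 * t) * t) := by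
      rw [← ENNReal.ofReal_toReal htail_ne, ← ht, ← ENNReal.ofReal_mul h.le]
    rw [this]
    have heq : ((n : ℝ) - (n : ℝ) ^ 2 * t) * t = (n : ℝ) * t - (n : ℝ) ^ 2 * t ^ 2 := by ring
    rw [heq]
    exact tail_convPow_ge F hsupp n x

lemma tendsto_tail (F : MeasureTheory.Measure ℝ) [IsProbabilityMeasure F] :
    Tendsto (tail F) atTop (𝓝 0) := by
  have h1 : Tendsto (fun x : ℝ => F (Set.Iic x)) atTop (𝓝 1) := by
    simpa [measure_univ] using tendsto_measure_Iic_atTop (μ := F)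
  have h2 : Tendsto (fun x : ℝ => (1 : ℝ≥0∞) - F (Set.Iic x)) atTop (𝓝 (1 - 1)) :=
    ENNReal.Tendsto.sub tendsto_const_nhds h1 (Or.inl ENNReal.one_ne_top)
  have heq : (fun x : ℝ => (1 : ℝ≥0∞) - F (Set.Iic x)) = tail F := by
    funext x
    have h := measure_compl (μ := F) (s := Set.Iic x) measurableSet_Iic (measure_ne_top F _)
    rw [Set.compl_Iic] at h
    simpa [tail, measure_univ] using h.symm
  rw [heq] at h2
  simpa using h2

set_option maxHeartbeats 1000000 in
/-- liminf of tail of randomly stopped convolution is at least Eτ. -/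
theorem stmt0 (F : MeasureTheory.Measure ℝ) [MeasureTheory.IsProbabilityMeasure F]
    (hsupp : F (Set.Iio 0) = 0) (hub : ∀ x : ℝ, tail F x ≠ 0)
    (p : ℕ → ℝ≥0∞) (hp0 : p 0 = 0) (hpsum : ∑' n, p n = 1)
    (hmean : ∑' n : ℕ, (n : ℝ≥0∞) * p n < ⊤) :
    (∑' n : ℕ, (n : ℝ≥0∞) * p n) ≤
      liminf (fun x : ℝ => (∑' n, p n * tail (convPow F n) x) / tail F x) atTop := by
  set L := liminf (fun x : ℝ => (∑' n, p n * tail (convPow F n) x) / tail F x) atTop with hL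
  rw [ENNReal.tsum_eq_iSup_sum]
  refine iSup_le fun s => ?_
  -- main claim, for ε ∈ (0,1)
  have claim : ∀ ε : ℝ, 0 < ε → ε < 1 →
      ENNReal.ofReal (1 - ε) * ∑ n ∈ s, (n : ℝ≥0∞) * p n ≤ L := by
    intro ε hε hε1
    set N : ℕ := s.sup id + 1 with hN
    set δ : ℝ := ε / N with hδ
    have hNpos : (0 : ℝ) < N := by positivity
    have hδpos : 0 < δ := div_pos hε hNpos
    have hev : ∀ᶠ x : ℝ in atTop, (tail F x).toReal < δ := by
      have := (tendsto_tail F).eventually_lt_const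
        (show (0 : ℝ≥0∞) < ENNReal.ofReal δ by simp [hδpos])
      filter_upwards [this] with x hx
      exact (ENNReal.lt_ofReal_iff_toReal_lt (measure_ne_top F _)).1 hx
    refine le_liminf_of_le (by isBoundedDefault) ?_
    filter_upwards [hev] with x hx
    set t : ℝ := (tail F x).toReal with ht
    have ht0 : 0 ≤ t := ENNReal.toReal_nonneg
    -- per-n bound for n ∈ s
    have hper : ∀ n ∈ s, ENNReal.ofReal (1 - ε) * (n : ℝ≥0∞)
        ≤ tail (convPow F n) x / tail F x := by
      intro n hn
      have hnN : (n : ℝ) ≤ N := by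
        have : n ≤ s.sup id := Finset.le_sup (f := id) hn
        exact_mod_cast le_trans this (Nat.le_succ _)
      have hkey : (n : ℝ) * (1 - ε) ≤ (n : ℝ) - (n : ℝ) ^ 2 * t := by
        have h1 : (n : ℝ) * t ≤ N * δ :=
          mul_le_mul hnN hx.le ht0 (le_of_lt hNpos)
        have h2 : (N : ℝ) * δ = ε := by
          rw [hδ]
          field_simp
        nlinarith [Nat.cast_nonneg (α := ℝ) n]
      calc ENNReal.ofReal (1 - ε) * (n : ℝ≥0∞)
          = ENNReal.ofReal ((n : ℝ) * (1 - ε)) := by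
            rw [ENNReal.ofReal_mul (Nat.cast_nonneg _), ENNReal.ofReal_natCast, mul_comm]
        _ ≤ ENNReal.ofReal ((n : ℝ) - (n : ℝ) ^ 2 * t) := ENNReal.ofReal_le_ofReal hkey
        _ ≤ tail (convPow F n) x / tail F x := tail_div_ge F hsupp hub n x
    calc ENNReal.ofReal (1 - ε) * ∑ n ∈ s, (n : ℝ≥0∞) * p n
        = ∑ n ∈ s, p n * (ENNReal.ofReal (1 - ε) * (n : ℝ≥0∞)) := by
          rw [Finset.mul_sum]
          exact Finset.sum_congr rfl fun n _ => by ring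
      _ ≤ ∑ n ∈ s, p n * (tail (convPow F n) x / tail F x) :=
          Finset.sum_le_sum fun n hn => mul_le_mul_right (hper n hn) _
      _ = ∑ n ∈ s, (p n * tail (convPow F n) x) / tail F x :=
          Finset.sum_congr rfl fun n _ => (mul_div_assoc _ _ _).symm
      _ = (∑ n ∈ s, p n * tail (convPow F n) x) / tail F x :=
          by simp [div_eq_mul_inv, Finset.sum_mul]
      _ ≤ (∑' n, p n * tail (convPow F n) x) / tail F x :=
          ENNReal.div_le_div_right (ENNReal.sum_le_tsum s) _
  -- conclude taking ε → 0
  refine ENNReal.le_of_forall_lt_one_mul_le fun a ha => ?_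
  rcases eq_or_ne a 0 with rfl | ha0
  · simp
  · have haT : a ≠ ⊤ := ne_top_of_lt (lt_of_lt_of_le ha (le_top))
    have hat1 : a.toReal < 1 := by
      rw [← ENNReal.toReal_one]
      exact ENNReal.toReal_strict_mono ENNReal.one_ne_top ha
    have hat0 : 0 < a.toReal := ENNReal.toReal_pos ha0 haT
    have := claim (1 - a.toReal) (by linarith) (by linarith)
    rw [show (1 : ℝ) - (1 - a.toReal) = a.toReal by ring, ENNReal.ofReal_toReal haT] at this
    exact this
end
end

section
/- If ξ ≥ 0 is a random variable with heavy-tailed distribution (i.e., E e^{γξ} = ∞ for every γ > 0) and δ ∈ (0,1], then there exists a function h : [0,∞) → [0,∞) such that: (i) h is subadditive, i.e., h(x) ≤ h(y) + h(x−y) for all 0 ≤ y ≤ x; (ii) h(x) = o(x) as x → ∞; (iii) E e^{h(ξ)} ≤ 1 + δ; (iv) E[ξ e^{h(ξ)}] = ∞. -/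
open MeasureTheory Filter Real Set
open scoped ENNReal Topology

noncomputable section

set_option linter.unusedSectionVars false

namespace Stmt1Aux

variable {x γ : ℕ → ℝ}

/-- index of the piece containing u -/
def dIdx (hex : ∀ u : ℝ, ∃ n, u < x n) (u : ℝ) : ℕ := Nat.find (hex u)

/-- slope step function -/
def slope (γ : ℕ → ℝ) (hex : ∀ u : ℝ, ∃ n, u < x n) (u : ℝ) : ℝ := γ (dIdx hex u)

/-- the function h -/
def hfun (γ : ℕ → ℝ) (hex : ∀ u : ℝ, ∃ n, u < x n) (y : ℝ) : ℝ :=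
  ∫ u in (0:ℝ)..y, slope γ hex u

lemma dIdx_mono (hex : ∀ u : ℝ, ∃ n, u < x n) : Monotone (dIdx (x := x) hex) := by
  intro u v huv
  exact Nat.find_mono (fun n hn => lt_of_le_of_lt huv hn)

lemma slope_anti (hex : ∀ u : ℝ, ∃ n, u < x n) (hγdec : ∀ n, γ (n+1) ≤ γ n) :
    Antitone (slope γ hex) :=
  fun u v huv => (antitone_nat_of_succ_le hγdec) (dIdx_mono hex huv)

lemma slope_eq_zero (hex : ∀ u : ℝ, ∃ n, u < x n) {u : ℝ} (hu : u < x 0) :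
    slope γ hex u = γ 0 := by
  have : dIdx (x := x) hex u = 0 := Nat.find_eq_zero (hex u) |>.2 hu
  unfold slope
  rw [this]

lemma dIdx_ge (hex : ∀ u : ℝ, ∃ n, u < x n) (hxmono : Monotone x) {n : ℕ} {u : ℝ}
    (hu : x n ≤ u) : n + 1 ≤ dIdx (x := x) hex u := by
  have : n < Nat.find (hex u) := by
    rw [Nat.lt_find_iff]
    intro m hm
    exact not_lt.2 (le_trans (hxmono hm) hu)
  unfold dIdx
  omega

lemma slope_eq_succ (hex : ∀ u : ℝ, ∃ n, u < x n) (hxmono : Monotone x) {n : ℕ} {u : ℝ}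
    (hu1 : x n ≤ u) (hu2 : u < x (n+1)) : slope γ hex u = γ (n+1) := by
  unfold slope
  congr 1
  have h1 : dIdx (x := x) hex u ≤ n + 1 := Nat.find_le hu2
  have h2 := dIdx_ge hex hxmono hu1
  omega

lemma slope_le_of_ge (hex : ∀ u : ℝ, ∃ n, u < x n) (hγdec : ∀ n, γ (n+1) ≤ γ n)
    (hxmono : Monotone x) {n : ℕ} {u : ℝ} (hu : x n ≤ u) : slope γ hex u ≤ γ (n+1) :=
  (antitone_nat_of_succ_le hγdec) (dIdx_ge hex hxmono hu)

lemma slope_intble (hex : ∀ u : ℝ, ∃ n, u < x n) (hγdec : ∀ n, γ (n+1) ≤ γ n) (a b : ℝ) :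
    IntervalIntegrable (slope γ hex) volume a b :=
  (slope_anti hex hγdec).intervalIntegrable

lemma hfun_add (hex : ∀ u : ℝ, ∃ n, u < x n) (hγdec : ∀ n, γ (n+1) ≤ γ n) (a b : ℝ) :
    hfun γ hex b = hfun γ hex a + ∫ u in a..b, slope γ hex u := by
  unfold hfun
  rw [intervalIntegral.integral_add_adjacent_intervals (slope_intble hex hγdec 0 a)
    (slope_intble hex hγdec a b)]

lemma hfun_mono (hex : ∀ u : ℝ, ∃ n, u < x n) (hγdec : ∀ n, γ (n+1) ≤ γ n)
    (hγpos : ∀ n, 0 < γ n) : Monotone (hfun γ hex) := by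
  intro a b h
  rw [hfun_add hex hγdec a b]
  have : 0 ≤ ∫ u in a..b, slope γ hex u :=
    intervalIntegral.integral_nonneg h (fun u _ => (hγpos _).le)
  linarith

lemma hfun_zero (hex : ∀ u : ℝ, ∃ n, u < x n) : hfun γ hex 0 = 0 := by unfold hfun; simp

lemma hfun_nonneg (hex : ∀ u : ℝ, ∃ n, u < x n) (hγdec : ∀ n, γ (n+1) ≤ γ n)
    (hγpos : ∀ n, 0 < γ n) {y : ℝ} (hy : 0 ≤ y) : 0 ≤ hfun γ hex y := by
  have := hfun_mono hex hγdec hγpos hy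
  rwa [hfun_zero] at this

lemma hfun_subadd (hex : ∀ u : ℝ, ∃ n, u < x n) (hγdec : ∀ n, γ (n+1) ≤ γ n)
    {X Y : ℝ} (hY : 0 ≤ Y) (hYX : Y ≤ X) :
    hfun γ hex X ≤ hfun γ hex Y + hfun γ hex (X - Y) := by
  have key : hfun γ hex X = hfun γ hex (X - Y) + ∫ u in (X-Y)..X, slope γ hex u :=
    hfun_add hex hγdec _ _
  have hcv : (∫ u in (X-Y)..X, slope γ hex u) = ∫ u in (0:ℝ)..Y, slope γ hex (u + (X - Y)) := by
    rw [intervalIntegral.integral_comp_add_right (slope γ hex) (X - Y)]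
    norm_num
  have hmon : (∫ u in (0:ℝ)..Y, slope γ hex (u + (X - Y))) ≤ ∫ u in (0:ℝ)..Y, slope γ hex u := by
    apply intervalIntegral.integral_mono_on hY
    · exact ((slope_anti hex hγdec).comp_monotone (monotone_id.add_const _)).intervalIntegrable
    · exact slope_intble hex hγdec 0 Y
    · intro u _
      exact slope_anti hex hγdec (by linarith)
  have : hfun γ hex X ≤ hfun γ hex (X - Y) + hfun γ hex Y := by
    rw [key, hcv]; unfold hfun; linarith
  linarith

lemma integral_slope_const (hex : ∀ u : ℝ, ∃ n, u < x n) {a b c : ℝ} {g : ℝ} (hab : a ≤ b)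
    (hcong : ∀ u, a < u → u < c → slope γ hex u = g) (hbc : b ≤ c) :
    (∫ u in a..b, slope γ hex u) = g * (b - a) := by
  have hae : ∀ᵐ u : ℝ, u ∈ Set.uIoc a b → slope γ hex u = g := by
    have h1 : ∀ᵐ u : ℝ, u ≠ c := by
      rw [ae_iff]
      simpa using measure_singleton (α := ℝ) c
    filter_upwards [h1] with u hu hmem
    rw [Set.uIoc_of_le hab] at hmem
    exact hcong u hmem.1 (lt_of_le_of_ne (le_trans hmem.2 hbc) hu)
  rw [intervalIntegral.integral_congr_ae hae, intervalIntegral.integral_const, smul_eq_mul,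
    mul_comm]

lemma hfun_base (hex : ∀ u : ℝ, ∃ n, u < x n) {y : ℝ} (hy0 : 0 ≤ y) (hy : y ≤ x 0) :
    hfun γ hex y = γ 0 * y := by
  unfold hfun
  rw [integral_slope_const hex hy0 (fun u _ hu2 => slope_eq_zero hex hu2) hy]
  ring_nf

lemma hfun_seg (hex : ∀ u : ℝ, ∃ n, u < x n) (hγdec : ∀ n, γ (n+1) ≤ γ n)
    (hxmono : Monotone x) {n : ℕ} {y : ℝ} (h1 : x n ≤ y) (h2 : y ≤ x (n+1)) :
    hfun γ hex y = hfun γ hex (x n) + γ (n+1) * (y - x n) := by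
  rw [hfun_add hex hγdec (x n) y,
    integral_slope_const hex h1 (fun u hu1 hu2 => slope_eq_succ hex hxmono hu1.le hu2) h2]

lemma hfun_upper (hex : ∀ u : ℝ, ∃ n, u < x n) (hγdec : ∀ n, γ (n+1) ≤ γ n)
    (hxmono : Monotone x) {n : ℕ} {y : ℝ} (h1 : x n ≤ y) :
    hfun γ hex y ≤ hfun γ hex (x n) + γ (n+1) * (y - x n) := by
  rw [hfun_add hex hγdec (x n) y]
  have : (∫ u in (x n)..y, slope γ hex u) ≤ ∫ u in (x n)..y, (fun _ => γ (n+1)) u := by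
    apply intervalIntegral.integral_mono_on h1 (slope_intble hex hγdec _ _)
      intervalIntegrable_const
    intro u hu
    exact slope_le_of_ge hex hγdec hxmono hu.1
  rw [intervalIntegral.integral_const, smul_eq_mul] at this
  linarith

lemma hfun_measurable (hex : ∀ u : ℝ, ∃ n, u < x n) (hγdec : ∀ n, γ (n+1) ≤ γ n)
    (hγpos : ∀ n, 0 < γ n) : Measurable (hfun γ hex) :=
  (hfun_mono hex hγdec hγpos).measurable



set_option linter.unusedSectionVars false

variable {Ω : Type*} [MeasurableSpace Ω]

/-- real-valued tail -/
def TailR (P : Measure Ω) (ξ : Ω → ℝ) (a : ℝ) : ℝ := (P {ω | a < ξ ω}).toReal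

/-- segment integral of e^{t + γ(ξ-a)} over {a < ξ ≤ b} -/
def Iseg (P : Measure Ω) (ξ : Ω → ℝ) (a t γ b : ℝ) : ℝ :=
  ∫ ω in {ω | a < ξ ω ∧ ξ ω ≤ b}, Real.exp (t + γ * (ξ ω - a)) ∂P

variable {P : Measure Ω} [IsProbabilityMeasure P] {ξ : Ω → ℝ}

lemma Smeas (hmeas : Measurable ξ) (a b : ℝ) : MeasurableSet {ω | a < ξ ω ∧ ξ ω ≤ b} :=
  (measurableSet_lt measurable_const hmeas).inter (measurableSet_le hmeas measurable_const)

lemma Tmeas (hmeas : Measurable ξ) (a : ℝ) : MeasurableSet {ω | a < ξ ω} :=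
  measurableSet_lt measurable_const hmeas

lemma TailR_nonneg (a : ℝ) : 0 ≤ TailR P ξ a := ENNReal.toReal_nonneg

lemma TailR_anti {a b : ℝ} (hab : a ≤ b) : TailR P ξ b ≤ TailR P ξ a := by
  apply ENNReal.toReal_mono (measure_ne_top _ _)
  exact measure_mono (fun ω hω => lt_of_le_of_lt hab hω)

lemma tail_small (hmeas : Measurable ξ) {ε : ℝ} (hε : 0 < ε) :
    ∃ X : ℝ, ∀ x : ℝ, X ≤ x → TailR P ξ x ≤ ε := by
  have htend : Tendsto (fun n : ℕ => P {ω | (n : ℝ) < ξ ω}) atTop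
      (𝓝 (P (⋂ n : ℕ, {ω | (n:ℝ) < ξ ω}))) := by
    apply tendsto_measure_iInter_atTop
    · exact fun n => (Tmeas hmeas _).nullMeasurableSet
    · intro n m hnm ω hω
      simp only [Set.mem_setOf_eq] at hω ⊢
      exact lt_of_le_of_lt (by exact_mod_cast hnm) hω
    · exact ⟨0, measure_ne_top _ _⟩
  have hempty : (⋂ n : ℕ, {ω | (n:ℝ) < ξ ω}) = ∅ := by
    ext ω
    simp only [Set.mem_iInter, Set.mem_setOf_eq, Set.mem_empty_iff_false, iff_false, not_forall,
      not_lt]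
    obtain ⟨n, hn⟩ := exists_nat_ge (ξ ω)
    exact ⟨n, hn⟩
  rw [hempty, measure_empty] at htend
  have := htend.eventually_lt_const (show (0:ℝ≥0∞) < ENNReal.ofReal ε by positivity)
  obtain ⟨N, hN⟩ := this.exists
  refine ⟨N, fun x hx => ?_⟩
  have h1 : P {ω | x < ξ ω} ≤ P {ω | (N:ℝ) < ξ ω} :=
    measure_mono (fun ω hω => lt_of_le_of_lt hx hω)
  have h2 : P {ω | x < ξ ω} ≤ ENNReal.ofReal ε := le_trans h1 hN.le
  calc TailR P ξ x ≤ (ENNReal.ofReal ε).toReal := ENNReal.toReal_mono ENNReal.ofReal_ne_top h2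
    _ = ε := ENNReal.toReal_ofReal hε.le

lemma integrand_meas (hmeas : Measurable ξ) (a t γ : ℝ) :
    Measurable (fun ω => Real.exp (t + γ * (ξ ω - a))) := by fun_prop

lemma Iseg_integrableOn (hmeas : Measurable ξ) {a b : ℝ} (t : ℝ) {γ M : ℝ}
    (hγ : |γ| ≤ M) (hM : 0 ≤ M) (hab : a ≤ b) :
    IntegrableOn (fun ω => Real.exp (t + γ * (ξ ω - a))) {ω | a < ξ ω ∧ ξ ω ≤ b} P := by
  apply Integrable.mono' (integrable_const (Real.exp (t + M * (b - a))))
    (integrand_meas hmeas a t γ).aestronglyMeasurable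
  rw [ae_restrict_iff' (Smeas hmeas a b)]
  filter_upwards with ω hω
  rw [Real.norm_eq_abs, Real.abs_exp]
  apply Real.exp_le_exp.2
  have h1 : 0 ≤ ξ ω - a := by linarith [hω.1]
  have h2 : ξ ω - a ≤ b - a := by linarith [hω.2]
  nlinarith [abs_nonneg γ, le_abs_self γ, (le_abs_self γ).trans hγ,
    mul_le_mul_of_nonneg_right ((le_abs_self γ).trans hγ) h1, mul_le_mul_of_nonneg_left h2 hM]

lemma Iseg_nonneg (hmeas : Measurable ξ) (a t γ b : ℝ) : 0 ≤ Iseg P ξ a t γ b := by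
  apply setIntegral_nonneg (Smeas hmeas a b)
  intro ω _
  positivity

lemma Iseg_mono_right (hmeas : Measurable ξ) {a b b' : ℝ} (t : ℝ) {γ : ℝ} (hγ : 0 ≤ γ)
    (hab : a ≤ b) (hbb : b ≤ b') : Iseg P ξ a t γ b ≤ Iseg P ξ a t γ b' := by
  apply setIntegral_mono_set (Iseg_integrableOn hmeas t (le_of_eq (abs_of_nonneg hγ)) hγ
    (hab.trans hbb))
  · filter_upwards with ω
    positivity
  · exact HasSubset.Subset.eventuallyLE (fun ω h => ⟨h.1, h.2.trans hbb⟩)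

lemma Iseg_zero_slope (hmeas : Measurable ξ) (a t b : ℝ) :
    Iseg P ξ a t 0 b = Real.exp t * (P {ω | a < ξ ω ∧ ξ ω ≤ b}).toReal := by
  unfold Iseg
  simp only [zero_mul, add_zero]
  rw [setIntegral_const, smul_eq_mul, mul_comm]
  rfl

lemma Iseg_zero_le (hmeas : Measurable ξ) (a t b : ℝ) :
    Iseg P ξ a t 0 b ≤ Real.exp t * TailR P ξ a := by
  rw [Iseg_zero_slope hmeas]
  apply mul_le_mul_of_nonneg_left _ (Real.exp_nonneg t)
  exact ENNReal.toReal_mono (measure_ne_top _ _) (measure_mono (fun ω hω => hω.1))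



lemma lint_seg_eq (hmeas : Measurable ξ) {a b γ : ℝ} (t : ℝ) (hγ : 0 ≤ γ) (hab : a ≤ b) :
    ∫⁻ ω in {ω | a < ξ ω ∧ ξ ω ≤ b}, ENNReal.ofReal (Real.exp (t + γ * (ξ ω - a))) ∂P
      = ENNReal.ofReal (Iseg P ξ a t γ b) := by
  unfold Iseg
  rw [MeasureTheory.ofReal_integral_eq_lintegral_ofReal
    (Iseg_integrableOn hmeas t (le_of_eq (abs_of_nonneg hγ)) hγ hab) ?_]
  filter_upwards with ω
  positivity

lemma heavy_Iseg (hmeas : Measurable ξ) (hpos : ∀ ω, 0 ≤ ξ ω)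
    (hheavy : ∀ γ' : ℝ, 0 < γ' → ∫⁻ ω, ENNReal.ofReal (Real.exp (γ' * ξ ω)) ∂P = ⊤)
    {γ : ℝ} (hγ : 0 < γ) (a t C X : ℝ) (ha : 0 ≤ a) :
    ∃ b, X ≤ b ∧ a + 1 ≤ b ∧ C ≤ Iseg P ξ a t γ b := by
  have hfmeas : Measurable (fun ω => ENNReal.ofReal (Real.exp (t + γ * (ξ ω - a)))) :=
    ((integrand_meas hmeas a t γ)).ennreal_ofReal
  -- total lintegral of f is ⊤
  have hftop : ∫⁻ ω, ENNReal.ofReal (Real.exp (t + γ * (ξ ω - a))) ∂P = ⊤ := by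
    have h1 : ∀ ω : Ω, ENNReal.ofReal (Real.exp (t + γ * (ξ ω - a))) = ENNReal.ofReal (Real.exp (t - γ * a)) *
        ENNReal.ofReal (Real.exp (γ * ξ ω)) := by
      intro ω
      rw [← ENNReal.ofReal_mul (Real.exp_nonneg _), ← Real.exp_add]
      congr 1
      ring
    simp only [h1]
    rw [lintegral_const_mul _
      (show Measurable fun ω => ENNReal.ofReal (Real.exp (γ * ξ ω)) by fun_prop),
      hheavy γ hγ, ENNReal.mul_top]
    simp [Real.exp_ne_zero, ENNReal.ofReal_eq_zero, not_le, Real.exp_pos]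
  -- lintegral over {ξ ≤ a} is finite, so over {a < ξ} it is ⊤
  have hsplit : ∫⁻ ω in {ω | a < ξ ω}, ENNReal.ofReal (Real.exp (t + γ * (ξ ω - a))) ∂P = ⊤ := by
    by_contra hne
    have hcompl : ∫⁻ ω in {ω | a < ξ ω}ᶜ, ENNReal.ofReal (Real.exp (t + γ * (ξ ω - a))) ∂P ≤ ENNReal.ofReal (Real.exp t) := by
      have : ∀ ω ∈ {ω | a < ξ ω}ᶜ, ENNReal.ofReal (Real.exp (t + γ * (ξ ω - a))) ≤ ENNReal.ofReal (Real.exp t) := by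
        intro ω hω
        simp only [Set.mem_compl_iff, Set.mem_setOf_eq, not_lt] at hω
        apply ENNReal.ofReal_le_ofReal
        apply Real.exp_le_exp.2
        nlinarith
      calc ∫⁻ ω in {ω | a < ξ ω}ᶜ, ENNReal.ofReal (Real.exp (t + γ * (ξ ω - a))) ∂P
          ≤ ∫⁻ _ω in {ω | a < ξ ω}ᶜ, ENNReal.ofReal (Real.exp t) ∂P :=
            setLIntegral_mono (by fun_prop) this
        _ ≤ ENNReal.ofReal (Real.exp t) * P {ω | a < ξ ω}ᶜ := by
            rw [setLIntegral_const]
        _ ≤ ENNReal.ofReal (Real.exp t) * 1 := by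
            exact mul_le_mul_right prob_le_one _
        _ = ENNReal.ofReal (Real.exp t) := mul_one _
    have := MeasureTheory.lintegral_add_compl (fun ω => ENNReal.ofReal (Real.exp (t + γ * (ξ ω - a)))) (Tmeas hmeas a) (μ := P)
    rw [hftop] at this
    have hlt2 : (∫⁻ ω in {ω | a < ξ ω}, ENNReal.ofReal (Real.exp (t + γ * (ξ ω - a))) ∂P)
        + ∫⁻ ω in {ω | a < ξ ω}ᶜ, ENNReal.ofReal (Real.exp (t + γ * (ξ ω - a))) ∂P < ⊤ :=
      ENNReal.add_lt_top.2 ⟨lt_top_iff_ne_top.2 hne,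
        lt_of_le_of_lt hcompl ENNReal.ofReal_lt_top⟩
    exact absurd this (ne_of_lt hlt2)
  -- monotone approximation by bounded slabs
  set B : ℕ → Set Ω := fun k => {ω | a < ξ ω ∧ ξ ω ≤ a + (k + 1)} with hB
  have hBmeas : ∀ k, MeasurableSet (B k) := fun k => Smeas hmeas _ _
  have hkey : (⨆ k, ∫⁻ ω in B k, (fun ω => ENNReal.ofReal (Real.exp (t + γ * (ξ ω - a)))) ω ∂P) = ⊤ := by
    have hmono : Monotone (fun k : ℕ => (B k).indicator (fun ω => ENNReal.ofReal (Real.exp (t + γ * (ξ ω - a))))) := by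
      intro k l hkl ω
      apply Set.indicator_le_indicator_of_subset _ (fun ω => zero_le)
      intro ω' hω'
      refine ⟨hω'.1, hω'.2.trans ?_⟩
      have : (k : ℝ) ≤ l := by exact_mod_cast hkl
      linarith
    have hsup : ∀ ω, (⨆ k, (B k).indicator (fun ω => ENNReal.ofReal (Real.exp (t + γ * (ξ ω - a)))) ω) = ({ω | a < ξ ω}).indicator (fun ω => ENNReal.ofReal (Real.exp (t + γ * (ξ ω - a)))) ω := by
      intro ω
      by_cases hω : a < ξ ω
      · rw [Set.indicator_of_mem (show ω ∈ {ω | a < ξ ω} from hω)]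
        obtain ⟨k, hk⟩ := exists_nat_ge (ξ ω - a - 1)
        apply le_antisymm
        · exact iSup_le (fun k => Set.indicator_le_self _ _ ω)
        · calc ENNReal.ofReal (Real.exp (t + γ * (ξ ω - a))) = (B k).indicator (fun ω => ENNReal.ofReal (Real.exp (t + γ * (ξ ω - a)))) ω := by
                rw [Set.indicator_of_mem (show ω ∈ B k from ⟨hω, by linarith⟩)]
            _ ≤ ⨆ k, (B k).indicator (fun ω => ENNReal.ofReal (Real.exp (t + γ * (ξ ω - a)))) ω :=
                le_iSup (fun k => (B k).indicator (fun ω => ENNReal.ofReal (Real.exp (t + γ * (ξ ω - a)))) ω) k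
      · rw [Set.indicator_of_notMem (show ω ∉ {ω | a < ξ ω} from hω)]
        simp only [ENNReal.iSup_eq_zero]
        intro k
        apply Set.indicator_of_notMem
        exact fun hc => hω hc.1
    calc (⨆ k, ∫⁻ ω in B k, (fun ω => ENNReal.ofReal (Real.exp (t + γ * (ξ ω - a)))) ω ∂P) = ⨆ k, ∫⁻ ω, (B k).indicator (fun ω => ENNReal.ofReal (Real.exp (t + γ * (ξ ω - a)))) ω ∂P := by
          simp_rw [lintegral_indicator (hBmeas _)]
      _ = ∫⁻ ω, ⨆ k, (B k).indicator (fun ω => ENNReal.ofReal (Real.exp (t + γ * (ξ ω - a)))) ω ∂P :=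
          (lintegral_iSup (fun k => hfmeas.indicator (hBmeas k)) hmono).symm
      _ = ∫⁻ ω, ({ω | a < ξ ω}).indicator (fun ω => ENNReal.ofReal (Real.exp (t + γ * (ξ ω - a)))) ω ∂P := by simp_rw [hsup]
      _ = ∫⁻ ω in {ω | a < ξ ω}, (fun ω => ENNReal.ofReal (Real.exp (t + γ * (ξ ω - a)))) ω ∂P := lintegral_indicator (Tmeas hmeas a) _
      _ = ⊤ := hsplit
  -- extract a slab with large integral
  have hlt : ENNReal.ofReal (max C 0) < ⨆ k, ∫⁻ ω in B k, (fun ω => ENNReal.ofReal (Real.exp (t + γ * (ξ ω - a)))) ω ∂P := by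
    rw [hkey]; exact ENNReal.ofReal_lt_top
  obtain ⟨k, hk⟩ := lt_iSup_iff.1 hlt
  refine ⟨max X (a + (k + 1)), le_max_left _ _, ?_, ?_⟩
  · have : (0:ℝ) ≤ k := Nat.cast_nonneg k
    calc a + 1 ≤ a + (k+1) := by linarith
      _ ≤ _ := le_max_right _ _
  · set b := max X (a + (k + 1)) with hb
    have hab : a ≤ b := by
      have : (0:ℝ) ≤ k := Nat.cast_nonneg k
      calc a ≤ a + (k+1) := by linarith
        _ ≤ b := le_max_right _ _
    have hsub : ∫⁻ ω in B k, (fun ω => ENNReal.ofReal (Real.exp (t + γ * (ξ ω - a)))) ω ∂P ≤ ∫⁻ ω in {ω | a < ξ ω ∧ ξ ω ≤ b}, (fun ω => ENNReal.ofReal (Real.exp (t + γ * (ξ ω - a)))) ω ∂P := by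
      apply lintegral_mono' (Measure.restrict_mono _ le_rfl) le_rfl
      intro ω hω
      exact ⟨hω.1, hω.2.trans (le_max_right _ _)⟩
    have hfin : ENNReal.ofReal (max C 0) < ENNReal.ofReal (Iseg P ξ a t γ b) := by
      rw [← lint_seg_eq hmeas t hγ.le hab]
      exact lt_of_lt_of_le hk hsub
    have : max C 0 < Iseg P ξ a t γ b := by
      by_contra hc
      push_neg at hc
      exact absurd (ENNReal.ofReal_le_ofReal hc) (not_le.2 hfin)
    calc C ≤ max C 0 := le_max_left _ _
      _ ≤ Iseg P ξ a t γ b := this.le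

lemma Iseg_continuous (hmeas : Measurable ξ) {a b : ℝ} (t : ℝ) (hab : a ≤ b) :
    Continuous (fun γ => Iseg P ξ a t γ b) := by
  rw [continuous_iff_continuousAt]
  intro γ₀
  unfold Iseg
  apply MeasureTheory.continuousAt_of_dominated
    (bound := fun _ => Real.exp (t + (|γ₀|+1) * (b - a)))
  · filter_upwards with γ using (integrand_meas hmeas a t γ).aestronglyMeasurable
  · have hball : ∀ᶠ γ in 𝓝 γ₀, |γ| ≤ |γ₀| + 1 := by
      have hb2 : ∀ᶠ γ in 𝓝 γ₀, γ ∈ Metric.ball γ₀ 1 := Metric.ball_mem_nhds γ₀ one_pos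
      filter_upwards [hb2] with γ hγ
      have := abs_sub_abs_le_abs_sub γ γ₀
      rw [Metric.mem_ball, Real.dist_eq] at hγ
      linarith
    filter_upwards [hball] with γ hγ
    rw [ae_restrict_iff' (Smeas hmeas a b)]
    filter_upwards with ω hω
    rw [Real.norm_eq_abs, Real.abs_exp]
    apply Real.exp_le_exp.2
    have h1 : 0 ≤ ξ ω - a := by linarith [hω.1]
    have h2 : ξ ω - a ≤ b - a := by linarith [hω.2]
    have h3 : γ * (ξ ω - a) ≤ |γ| * (ξ ω - a) := mul_le_mul_of_nonneg_right (le_abs_self γ) h1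
    have h4 : |γ| * (ξ ω - a) ≤ (|γ₀|+1) * (ξ ω - a) := mul_le_mul_of_nonneg_right hγ h1
    have h5 : (|γ₀|+1) * (ξ ω - a) ≤ (|γ₀|+1) * (b - a) :=
      mul_le_mul_of_nonneg_left h2 (by positivity)
    linarith
  · exact integrable_const _
  · filter_upwards with ω
    apply Continuous.continuousAt
    fun_prop

lemma step (hmeas : Measurable ξ) (hpos : ∀ ω, 0 ≤ ξ ω)
    (hheavy : ∀ γ' : ℝ, 0 < γ' → ∫⁻ ω, ENNReal.ofReal (Real.exp (γ' * ξ ω)) ∂P = ⊤)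
    {a t γcap T : ℝ} (X : ℝ)
    (ha : 0 ≤ a) (ht : 0 ≤ t) (hγcap : 0 < γcap) (hT : 0 < T)
    (hentry : Real.exp t * TailR P ξ a ≤ T/8) :
    ∃ b γ, X ≤ b ∧ a + 1 ≤ b ∧ 0 < γ ∧ γ ≤ γcap ∧
      Iseg P ξ a t γ b + 16 * Real.exp (t + γ * (b - a)) * TailR P ξ b = T/2 := by
  obtain ⟨b1, hb1X, hb1a, hb1⟩ := heavy_Iseg hmeas hpos hheavy hγcap a t T X ha
  obtain ⟨X2, hX2⟩ := tail_small (P := P) hmeas (ε := Real.exp (-t) * (T/128)) (by positivity)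
  set b := max b1 X2 with hbdef
  have hab : a + 1 ≤ b := le_trans hb1a (le_max_left _ _)
  have hab' : a ≤ b := by linarith
  have hXb : X ≤ b := le_trans hb1X (le_max_left _ _)
  have htail : Real.exp t * TailR P ξ b ≤ T/128 := by
    have h2 := hX2 b (le_max_right _ _)
    calc Real.exp t * TailR P ξ b ≤ Real.exp t * (Real.exp (-t) * (T/128)) :=
          mul_le_mul_of_nonneg_left h2 (Real.exp_nonneg t)
      _ = T/128 := by
          rw [← mul_assoc, ← Real.exp_add]
          simp
  set g : ℝ → ℝ := fun γ => Iseg P ξ a t γ b + 16 * Real.exp (t + γ * (b - a)) * TailR P ξ b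
    with hgdef
  have hg0 : g 0 ≤ T/4 := by
    have h1 : Iseg P ξ a t 0 b ≤ Real.exp t * TailR P ξ a := Iseg_zero_le hmeas a t b
    have h2 : (16:ℝ) * Real.exp (t + 0 * (b - a)) * TailR P ξ b ≤ 16 * (T/128) := by
      rw [zero_mul, add_zero]
      have := mul_le_mul_of_nonneg_left htail (by norm_num : (0:ℝ) ≤ 16)
      linarith [this]
    show Iseg P ξ a t 0 b + 16 * Real.exp (t + 0 * (b - a)) * TailR P ξ b ≤ T/4
    rw [zero_mul, add_zero] at h2 ⊢
    linarith
  have hgcap : T ≤ g γcap := by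
    have h1 : Iseg P ξ a t γcap b1 ≤ Iseg P ξ a t γcap b :=
      Iseg_mono_right hmeas t hγcap.le (by linarith) (le_max_left _ _)
    have h2 : 0 ≤ 16 * Real.exp (t + γcap * (b - a)) * TailR P ξ b := by
      have := TailR_nonneg (P := P) (ξ := ξ) b
      positivity
    show T ≤ Iseg P ξ a t γcap b + 16 * Real.exp (t + γcap * (b - a)) * TailR P ξ b
    linarith
  have hcont : ContinuousOn g (Icc 0 γcap) := by
    apply Continuous.continuousOn
    apply (Iseg_continuous hmeas t hab').add
    fun_prop
  have hmem : T/2 ∈ Icc (g 0) (g γcap) :=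
    ⟨hg0.trans (by linarith), le_trans (by linarith : T/2 ≤ T) hgcap⟩
  obtain ⟨γ, hγmem, hγval⟩ := intermediate_value_Icc hγcap.le hcont hmem
  refine ⟨b, γ, hXb, hab, ?_, hγmem.2, hγval⟩
  rcases lt_or_eq_of_le hγmem.1 with h | h
  · exact h
  · exfalso
    rw [← h] at hγval
    rw [hγval] at hg0
    linarith

/-- per-segment budget -/
def TbF (δ : ℝ) : ℕ → ℝ := fun n => δ / 2^(n+4)

/-- largeness requirement for breakpoints -/
def BigF (δ : ℝ) : ℕ → ℝ := fun n => ((n:ℝ)+1) * 2^(n+10) / δ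

def InvP (P : Measure Ω) (ξ : Ω → ℝ) (δ : ℝ) (n : ℕ) (p : ℝ × ℝ × ℝ) : Prop :=
  0 < p.2.2 ∧ p.2.2 ≤ 1/((n:ℝ)+1) ∧ 0 ≤ p.2.1 ∧ BigF δ n ≤ p.1 ∧
    Real.exp p.2.1 * TailR P ξ p.1 ≤ TbF δ n / 8

def RelP (P : Measure Ω) (ξ : Ω → ℝ) (δ : ℝ) (n : ℕ) (p q : ℝ × ℝ × ℝ) : Prop :=
  p.1 + 1 ≤ q.1 ∧ q.2.2 ≤ p.2.2 ∧ q.2.1 = p.2.1 + q.2.2 * (q.1 - p.1) ∧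
    Iseg P ξ p.1 p.2.1 q.2.2 q.1 + 16 * Real.exp q.2.1 * TailR P ξ q.1 = TbF δ n / 2

lemma TbF_pos {δ : ℝ} (hδ : 0 < δ) (n : ℕ) : 0 < TbF δ n := by unfold TbF; positivity

lemma BigF_pos {δ : ℝ} (hδ : 0 < δ) (n : ℕ) : 0 < BigF δ n := by unfold BigF; positivity

lemma BigF_one_le {δ : ℝ} (hδ : 0 < δ) (hδ2 : δ ≤ 1) (n : ℕ) : 1 ≤ BigF δ n := by
  unfold BigF
  rw [le_div_iff₀ hδ]
  have h1 : (1:ℝ) ≤ 2^(n+10) := one_le_pow₀ (by norm_num)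
  have h2 : (0:ℝ) ≤ (n:ℝ) := Nat.cast_nonneg n
  nlinarith

lemma step_exists (hmeas : Measurable ξ) (hpos : ∀ ω, 0 ≤ ξ ω)
    (hheavy : ∀ γ' : ℝ, 0 < γ' → ∫⁻ ω, ENNReal.ofReal (Real.exp (γ' * ξ ω)) ∂P = ⊤)
    {δ : ℝ} (hδ1 : 0 < δ) (n : ℕ) (p : ℝ × ℝ × ℝ) (hp : InvP P ξ δ n p) :
    ∃ q, InvP P ξ δ (n+1) q ∧ RelP P ξ δ n p q := by
  obtain ⟨a, t, γ⟩ := p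
  obtain ⟨hγpos, hγle, htnn, hbig, hentry⟩ := hp
  dsimp only at hγpos hγle htnn hbig hentry
  have hTpos : 0 < TbF δ n := TbF_pos hδ1 n
  have hBpos : (0:ℝ) < BigF δ n := BigF_pos hδ1 n
  have ha : 0 ≤ a := le_trans hBpos.le hbig
  have hγcap : 0 < min γ (1/((n:ℝ)+2)) := lt_min hγpos (by positivity)
  obtain ⟨b, γ', hXb, hab, hγ'pos, hγ'le, heq⟩ :=
    step hmeas hpos hheavy (BigF δ (n+1)) ha htnn hγcap hTpos hentry
  have hTT : TbF δ n / 32 ≤ TbF δ (n+1) / 8 := by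
    show δ/2^(n+4)/32 ≤ δ/2^(n+1+4)/8
    have h2 : (2:ℝ)^(n+1+4) = 2^(n+4)*2 := by
      rw [show n+1+4 = (n+4)+1 by omega, pow_succ]
    rw [h2, div_div, div_div]
    have hp4 : (0:ℝ) < 2^(n+4) := by positivity
    apply div_le_div_of_nonneg_left hδ1.le (by nlinarith) (by nlinarith)
  refine ⟨(b, t + γ' * (b - a), γ'),
    ⟨hγ'pos, ?_, ?_, hXb, ?_⟩,
    ⟨hab, le_trans hγ'le (min_le_left _ _), rfl, heq⟩⟩
  · show γ' ≤ 1 / ((((n+1 : ℕ)) : ℝ) + 1)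
    push_cast
    calc γ' ≤ min γ (1/((n:ℝ)+2)) := hγ'le
      _ ≤ 1/((n:ℝ)+2) := min_le_right _ _
      _ = 1/((n:ℝ)+1+1) := by ring_nf
  · show (0:ℝ) ≤ t + γ' * (b - a)
    nlinarith
  · show Real.exp (t + γ' * (b - a)) * TailR P ξ b ≤ TbF δ (n+1) / 8
    have hIseg0 : 0 ≤ Iseg P ξ a t γ' b := Iseg_nonneg hmeas a t γ' b
    have hTR : 0 ≤ TailR P ξ b := TailR_nonneg (P := P) (ξ := ξ) b
    have h16 : 16 * Real.exp (t + γ' * (b - a)) * TailR P ξ b ≤ TbF δ n / 2 := by linarith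
    have : Real.exp (t + γ' * (b - a)) * TailR P ξ b ≤ TbF δ n / 32 := by linarith
    linarith

lemma base_exists (hmeas : Measurable ξ) {δ : ℝ} (hδ1 : 0 < δ) (hδ2 : δ ≤ 1) :
    ∃ p : ℝ × ℝ × ℝ, InvP P ξ δ 0 p ∧ p.2.1 = Real.log (1+δ/2) ∧ p.2.2 * p.1 = p.2.1 := by
  obtain ⟨X0, hX0⟩ := tail_small (P := P) hmeas (ε := δ/256) (by positivity)
  set x0 : ℝ := max X0 (BigF δ 0) with hx0def
  have hx0big : BigF δ 0 ≤ x0 := le_max_right _ _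
  have hx0one : (1:ℝ) ≤ x0 := le_trans (BigF_one_le hδ1 hδ2 0) hx0big
  have hx0pos : (0:ℝ) < x0 := by linarith
  set t0 : ℝ := Real.log (1+δ/2) with ht0def
  have ht0nn : 0 ≤ t0 := Real.log_nonneg (by linarith)
  have ht0le : t0 ≤ δ/2 := by
    calc t0 ≤ (1+δ/2) - 1 := Real.log_le_sub_one_of_pos (by linarith)
      _ = δ/2 := by ring
  refine ⟨(x0, t0, t0 / x0), ⟨?_, ?_, ht0nn, hx0big, ?_⟩, rfl, ?_⟩
  · -- 0 < t0/x0 : need t0 > 0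
    have : 0 < t0 := Real.log_pos (by linarith)
    positivity
  · -- t0/x0 ≤ 1/(0+1)
    push_cast
    rw [div_le_iff₀ hx0pos]
    nlinarith
  · -- entry invariant
    have hexp : Real.exp t0 = 1 + δ/2 := Real.exp_log (by linarith)
    have htail : TailR P ξ x0 ≤ δ/256 := hX0 x0 (le_max_left _ _)
    have hTRnn : 0 ≤ TailR P ξ x0 := TailR_nonneg x0
    show Real.exp t0 * TailR P ξ x0 ≤ TbF δ 0 / 8
    have : TbF δ 0 / 8 = δ/128 := by
      show δ/2^(0+4)/8 = δ/128
      norm_num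
      ring
    rw [this, hexp]
    nlinarith
  · show t0 / x0 * x0 = t0
    field_simp

lemma seq_exists (hmeas : Measurable ξ) (hpos : ∀ ω, 0 ≤ ξ ω)
    (hheavy : ∀ γ' : ℝ, 0 < γ' → ∫⁻ ω, ENNReal.ofReal (Real.exp (γ' * ξ ω)) ∂P = ⊤)
    {δ : ℝ} (hδ1 : 0 < δ) (hδ2 : δ ≤ 1) :
    ∃ F : ℕ → ℝ × ℝ × ℝ, (∀ n, InvP P ξ δ n (F n)) ∧ (∀ n, RelP P ξ δ n (F n) (F (n+1))) ∧
      (F 0).2.1 = Real.log (1+δ/2) ∧ (F 0).2.2 * (F 0).1 = (F 0).2.1 := by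
  obtain ⟨p0, hp0, hb1, hb2⟩ := base_exists (P := P) (ξ := ξ) hmeas hδ1 hδ2
  have hstep := step_exists (P := P) (ξ := ξ) hmeas hpos hheavy hδ1
  choose! f hf1 hf2 using hstep
  refine ⟨fun n => Nat.rec p0 f n, ?_, ?_, hb1, hb2⟩
  · intro n
    induction n with
    | zero => exact hp0
    | succ m ih => exact hf1 m _ ih
  · intro n
    have hInvn : InvP P ξ δ n (Nat.rec p0 f n) := by
      induction n with
      | zero => exact hp0
      | succ m ih => exact hf1 m _ ih
    exact hf2 n _ hInvn

end Stmt1Aux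

set_option maxHeartbeats 1000000 in
open Stmt1Aux in
/-- existence of a subadditive o(x) function h with E e^{h(ξ)} ≤ 1+δ
and E ξ e^{h(ξ)} = ∞, for any heavy-tailed nonnegative random variable ξ. -/
theorem stmt1 {Ω : Type*} [MeasurableSpace Ω] (P : MeasureTheory.Measure Ω)
    [MeasureTheory.IsProbabilityMeasure P]
    (ξ : Ω → ℝ) (hmeas : Measurable ξ) (hpos : ∀ ω, 0 ≤ ξ ω)
    (hheavy : ∀ γ : ℝ, 0 < γ → ∫⁻ ω, ENNReal.ofReal (Real.exp (γ * ξ ω)) ∂P = ⊤)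
    (δ : ℝ) (hδ1 : 0 < δ) (hδ2 : δ ≤ 1) :
    ∃ h : ℝ → ℝ,
      (∀ x, 0 ≤ x → 0 ≤ h x) ∧
      (∀ x y : ℝ, 0 ≤ y → y ≤ x → h x ≤ h y + h (x - y)) ∧
      Tendsto (fun x => h x / x) atTop (𝓝 0) ∧
      (∫⁻ ω, ENNReal.ofReal (Real.exp (h (ξ ω))) ∂P ≤ ENNReal.ofReal (1 + δ)) ∧
      ∫⁻ ω, ENNReal.ofReal (ξ ω * Real.exp (h (ξ ω))) ∂P = ⊤ := by
  classical
  obtain ⟨F, hFInv, hFRel, hF0t, hF0γ⟩ := seq_exists (P := P) (ξ := ξ) hmeas hpos hheavy hδ1 hδ2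
  set xs : ℕ → ℝ := fun n => (F n).1 with hxsdef
  set ts : ℕ → ℝ := fun n => (F n).2.1 with htsdef
  set gs : ℕ → ℝ := fun n => (F n).2.2 with hgsdef
  have hgpos : ∀ n, 0 < gs n := fun n => (hFInv n).1
  have hgle : ∀ n, gs n ≤ 1/((n:ℝ)+1) := fun n => (hFInv n).2.1
  have htnn : ∀ n, 0 ≤ ts n := fun n => (hFInv n).2.2.1
  have hbig : ∀ n, BigF δ n ≤ xs n := fun n => (hFInv n).2.2.2.1
  have hsucc : ∀ n, xs n + 1 ≤ xs (n+1) := fun n => (hFRel n).1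
  have hgdec : ∀ n, gs (n+1) ≤ gs n := fun n => (hFRel n).2.1
  have hteq : ∀ n, ts (n+1) = ts n + gs (n+1) * (xs (n+1) - xs n) := fun n => (hFRel n).2.2.1
  have hIeq : ∀ n, Iseg P ξ (xs n) (ts n) (gs (n+1)) (xs (n+1))
      + 16 * Real.exp (ts (n+1)) * TailR P ξ (xs (n+1)) = TbF δ n / 2 := fun n => (hFRel n).2.2.2
  have hxmono : Monotone xs := monotone_nat_of_le_succ (fun n => by linarith [hsucc n])
  have hxsle : ∀ n, xs n ≤ xs (n+1) := fun n => by linarith [hsucc n]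
  have hx0one : (1:ℝ) ≤ xs 0 := le_trans (BigF_one_le hδ1 hδ2 0) (hbig 0)
  have hxone : ∀ n, (1:ℝ) ≤ xs n := fun n => le_trans hx0one (hxmono (Nat.zero_le n))
  have hxge : ∀ n : ℕ, xs 0 + n ≤ xs n := by
    intro n; induction n with
    | zero => simp
    | succ m ih =>
      have := hsucc m
      push_cast
      linarith
  have hex : ∀ u : ℝ, ∃ n, u < xs n := by
    intro u
    obtain ⟨n, hn⟩ := exists_nat_gt (u - xs 0)
    exact ⟨n, by linarith [hxge n]⟩
  -- value of h at breakpoints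
  have hval : ∀ n, hfun gs hex (xs n) = ts n := by
    intro n; induction n with
    | zero =>
      rw [hfun_base hex (by linarith : (0:ℝ) ≤ xs 0) le_rfl]
      exact hF0γ
    | succ m ih =>
      rw [hfun_seg hex hgdec hxmono (hxsle m) le_rfl, ih, hteq m]
  -- (iii) o(x) property
  have htend : Tendsto (fun y => hfun gs hex y / y) atTop (𝓝 0) := by
    rw [Metric.tendsto_atTop]
    intro ε hε
    obtain ⟨n, hn⟩ := exists_nat_gt (2/ε)
    refine ⟨max (xs n) (2 * ts n / ε + 1), fun y hy => ?_⟩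
    have hy1 : xs n ≤ y := le_trans (le_max_left _ _) hy
    have hy2 : 2 * ts n / ε + 1 ≤ y := le_trans (le_max_right _ _) hy
    have hypos : 0 < y := lt_of_lt_of_le (by linarith [hxone n] : (0:ℝ) < xs n) hy1
    have hnn : 0 ≤ hfun gs hex y := hfun_nonneg hex hgdec hgpos (by linarith)
    rw [Real.dist_eq, sub_zero, abs_of_nonneg (div_nonneg hnn hypos.le)]
    have hub := hfun_upper hex hgdec hxmono (n := n) hy1
    rw [hval n] at hub
    have hg2 : gs (n+1) ≤ 1/((n:ℝ)+2) := by
      have h9 := hgle (n+1)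
      push_cast at h9
      calc gs (n+1) ≤ 1/((n:ℝ)+1+1) := h9
        _ = 1/((n:ℝ)+2) := by ring_nf
    have e0 : hfun gs hex y ≤ ts n + 1/((n:ℝ)+2) * y := by
      have h1 : gs (n+1) * (y - xs n) ≤ 1/((n:ℝ)+2) * (y - xs n) :=
        mul_le_mul_of_nonneg_right hg2 (by linarith)
      have h2 : 1/((n:ℝ)+2) * (y - xs n) ≤ 1/((n:ℝ)+2) * y := by
        apply mul_le_mul_of_nonneg_left _ (by positivity)
        linarith [hxone n]
      linarith
    have e1 : hfun gs hex y / y ≤ ts n / y + 1/((n:ℝ)+2) := by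
      have := (div_le_div_iff_of_pos_right hypos).2 e0
      calc hfun gs hex y / y ≤ (ts n + 1/((n:ℝ)+2) * y) / y := this
        _ = ts n / y + (1/((n:ℝ)+2) * y) / y := add_div _ _ _
        _ = ts n / y + 1/((n:ℝ)+2) := by
            rw [mul_div_assoc, div_self hypos.ne', mul_one]
    have e2 : ts n / y < ε/2 := by
      rw [div_lt_iff₀ hypos]
      have k1 : ε * (2*ts n/ε + 1) = 2*ts n + ε := by field_simp
      have k2 : ε * (2*ts n/ε + 1) ≤ ε * y := mul_le_mul_of_nonneg_left hy2 hε.le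
      nlinarith [htnn n]
    have e3 : 1/((n:ℝ)+2) < ε/2 := by
      rw [div_lt_iff₀ (by positivity : (0:ℝ) < (n:ℝ)+2)]
      have hn' : 2/ε < (n:ℝ) := hn
      rw [div_lt_iff₀ hε] at hn'
      nlinarith
    linarith
  -- the partition of Ω
  set A : ℕ → Set Ω :=
    fun n => Nat.rec {ω | ξ ω ≤ xs 0} (fun m _ => {ω | xs m < ξ ω ∧ ξ ω ≤ xs (m+1)}) n
    with hAdef
  have hA0 : A 0 = {ω | ξ ω ≤ xs 0} := rfl
  have hAs : ∀ m, A (m+1) = {ω | xs m < ξ ω ∧ ξ ω ≤ xs (m+1)} := fun m => rfl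
  have hAmeas : ∀ n, MeasurableSet (A n) := by
    intro n
    cases n with
    | zero => exact measurableSet_le hmeas measurable_const
    | succ m => exact Smeas hmeas _ _
  have hAdisj : Pairwise (Function.onFun Disjoint A) := by
    have key : ∀ i j, i < j → Disjoint (A i) (A j) := by
      intro i j hij
      obtain ⟨m, rfl⟩ : ∃ m, j = m + 1 := ⟨j - 1, by omega⟩
      rw [Set.disjoint_left]
      intro ω h1 h2
      rw [hAs m] at h2
      have hx1 : ξ ω ≤ xs i := by
        cases i with
        | zero => exact h1
        | succ k =>
          rw [hAs k] at h1
          exact h1.2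
      have hx2 : xs i ≤ xs m := hxmono (by omega)
      exact absurd h2.1 (not_lt.2 (by linarith))
    intro i j hij
    rcases hij.lt_or_gt with hlt | hlt
    · exact key i j hlt
    · exact (key j i hlt).symm
  have hAunion : (⋃ n, A n) = Set.univ := by
    ext ω
    simp only [Set.mem_iUnion, Set.mem_univ, iff_true]
    have hex2 : ∃ n, ξ ω ≤ xs n := (hex (ξ ω)).imp (fun n hn => hn.le)
    by_cases h0 : ξ ω ≤ xs 0
    · exact ⟨0, h0⟩
    · have hk := Nat.find_spec hex2
      have hkpos : Nat.find hex2 ≠ 0 := by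
        intro hc
        rw [hc] at hk
        exact h0 hk
      obtain ⟨m, hm⟩ : ∃ m, Nat.find hex2 = m + 1 := ⟨Nat.find hex2 - 1, by omega⟩
      refine ⟨m+1, ?_⟩
      rw [hAs m]
      refine ⟨?_, ?_⟩
      · have := Nat.find_min hex2 (show m < Nat.find hex2 by omega)
        exact not_le.1 this
      · rw [← hm]
        exact hk
  have hsplit : ∀ f : Ω → ℝ≥0∞, ∫⁻ ω, f ω ∂P = ∑' n, ∫⁻ ω in A n, f ω ∂P := by
    intro f
    rw [← setLIntegral_univ, ← hAunion, lintegral_iUnion hAmeas hAdisj]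
  have hhm : Measurable (hfun gs hex) := hfun_measurable hex hgdec hgpos
  have hfm1 : Measurable (fun ω => ENNReal.ofReal (Real.exp (hfun gs hex (ξ ω)))) :=
    (Real.measurable_exp.comp (hhm.comp hmeas)).ennreal_ofReal
  have hfm2 : Measurable (fun ω => ENNReal.ofReal (ξ ω * Real.exp (hfun gs hex (ξ ω)))) :=
    (hmeas.mul (Real.measurable_exp.comp (hhm.comp hmeas))).ennreal_ofReal
  -- first piece of the budget
  have hts0 : ts 0 = Real.log (1+δ/2) := hF0t
  have hpiece0 : ∫⁻ ω in A 0, ENNReal.ofReal (Real.exp (hfun gs hex (ξ ω))) ∂P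
      ≤ ENNReal.ofReal (1+δ/2) := by
    have hb : ∀ ω ∈ A 0, ENNReal.ofReal (Real.exp (hfun gs hex (ξ ω)))
        ≤ ENNReal.ofReal (1+δ/2) := by
      intro ω hω
      apply ENNReal.ofReal_le_ofReal
      have h1 : hfun gs hex (ξ ω) ≤ hfun gs hex (xs 0) := hfun_mono hex hgdec hgpos hω
      rw [hval 0, hts0] at h1
      calc Real.exp (hfun gs hex (ξ ω)) ≤ Real.exp (Real.log (1+δ/2)) := Real.exp_le_exp.2 h1
        _ = 1+δ/2 := Real.exp_log (by linarith)
    calc ∫⁻ ω in A 0, ENNReal.ofReal (Real.exp (hfun gs hex (ξ ω))) ∂P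
        ≤ ∫⁻ _ω in A 0, ENNReal.ofReal (1+δ/2) ∂P := setLIntegral_mono measurable_const hb
      _ = ENNReal.ofReal (1+δ/2) * P (A 0) := setLIntegral_const _ _
      _ ≤ ENNReal.ofReal (1+δ/2) * 1 := mul_le_mul_right prob_le_one _
      _ = ENNReal.ofReal (1+δ/2) := mul_one _
  -- the generic pieces
  have hpiece : ∀ n, ∫⁻ ω in A (n+1), ENNReal.ofReal (Real.exp (hfun gs hex (ξ ω))) ∂P
      = ENNReal.ofReal (Iseg P ξ (xs n) (ts n) (gs (n+1)) (xs (n+1))) := by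
    intro n
    rw [hAs n, ← lint_seg_eq hmeas (ts n) (hgpos (n+1)).le (hxsle n)]
    apply setLIntegral_congr_fun (Smeas hmeas _ _)
    intro ω hmem
    dsimp only
    congr 1
    rw [hfun_seg hex hgdec hxmono hmem.1.le hmem.2, hval n]
  have hIseg_le : ∀ n, Iseg P ξ (xs n) (ts n) (gs (n+1)) (xs (n+1)) ≤ TbF δ n / 2 := by
    intro n
    have h1 := hIeq n
    have h2 : 0 ≤ 16 * Real.exp (ts (n+1)) * TailR P ξ (xs (n+1)) := by
      have := TailR_nonneg (P := P) (ξ := ξ) (xs (n+1))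
      positivity
    linarith
  -- (iv) the budget
  have hbudget : ∫⁻ ω, ENNReal.ofReal (Real.exp (hfun gs hex (ξ ω))) ∂P
      ≤ ENNReal.ofReal (1 + δ) := by
    rw [hsplit (fun ω => ENNReal.ofReal (Real.exp (hfun gs hex (ξ ω))))]
    rw [tsum_eq_zero_add' ENNReal.summable]
    have hsum : ∑' n : ℕ, TbF δ n / 2 = δ/16 := by
      have hc : ∀ n : ℕ, TbF δ n / 2 = (δ/32) * (1/2)^n := by
        intro n
        show δ/2^(n+4)/2 = δ/32*(1/2)^n
        rw [div_pow, one_pow, pow_add, div_mul_div_comm, mul_one, div_div]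
        congr 1
        ring
      rw [tsum_congr hc, tsum_mul_left, tsum_geometric_of_lt_one (by norm_num) (by norm_num)]
      norm_num
      ring
    have hsummable : Summable (fun n : ℕ => TbF δ n / 2) := by
      apply Summable.congr ((summable_geometric_of_lt_one (by norm_num : (0:ℝ) ≤ 1/2)
        (by norm_num)).mul_left (δ/32))
      intro n
      show (δ/32) * (1/2)^n = δ/2^(n+4)/2
      rw [div_pow, one_pow, pow_add, div_mul_div_comm, mul_one, div_div]
      congr 1
      ring
    have htailsum : ∑' n : ℕ, ∫⁻ ω in A (n+1), ENNReal.ofReal (Real.exp (hfun gs hex (ξ ω))) ∂P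
        ≤ ENNReal.ofReal (δ/16) := by
      calc ∑' n : ℕ, ∫⁻ ω in A (n+1), ENNReal.ofReal (Real.exp (hfun gs hex (ξ ω))) ∂P
          ≤ ∑' n : ℕ, ENNReal.ofReal (TbF δ n / 2) := by
            apply ENNReal.tsum_le_tsum
            intro n
            rw [hpiece n]
            exact ENNReal.ofReal_le_ofReal (hIseg_le n)
        _ = ENNReal.ofReal (∑' n : ℕ, TbF δ n / 2) :=
            (ENNReal.ofReal_tsum_of_nonneg
              (fun n => by have := TbF_pos hδ1 n; positivity) hsummable).symm
        _ = ENNReal.ofReal (δ/16) := by rw [hsum]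
    calc (∫⁻ ω in A 0, ENNReal.ofReal (Real.exp (hfun gs hex (ξ ω))) ∂P)
        + ∑' n : ℕ, ∫⁻ ω in A (n+1), ENNReal.ofReal (Real.exp (hfun gs hex (ξ ω))) ∂P
        ≤ ENNReal.ofReal (1+δ/2) + ENNReal.ofReal (δ/16) := add_le_add hpiece0 htailsum
      _ = ENNReal.ofReal (1+δ/2+δ/16) := (ENNReal.ofReal_add (by linarith) (by positivity)).symm
      _ ≤ ENNReal.ofReal (1+δ) := ENNReal.ofReal_le_ofReal (by linarith)
  -- (v) divergence
  have hdiv : ∀ n : ℕ, ENNReal.ofReal ((n:ℝ)+1)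
      ≤ ∫⁻ ω, ENNReal.ofReal (ξ ω * Real.exp (hfun gs hex (ξ ω))) ∂P := by
    intro n
    have hTpos := TbF_pos hδ1 n
    have hxs_nn : (0:ℝ) ≤ xs n := by linarith [hxone n]
    have hxs1_nn : (0:ℝ) ≤ xs (n+1) := by linarith [hxone (n+1)]
    have hBT1 : BigF δ n * TbF δ n = ((n:ℝ)+1) * 64 := by
      show (((n:ℝ)+1) * 2^(n+10) / δ) * (δ / 2^(n+4)) = ((n:ℝ)+1) * 64
      have h1 : (2:ℝ)^(n+10) = 2^(n+4) * 64 := by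
        rw [show n+10 = (n+4)+6 by omega, pow_add]
        norm_num
      field_simp
      rw [h1]
    have hBT2 : BigF δ (n+1) * TbF δ n = ((n:ℝ)+2) * 128 := by
      show ((((n+1:ℕ)):ℝ)+1) * 2^(n+1+10) / δ * (δ / 2^(n+4)) = ((n:ℝ)+2)*128
      have h1 : (2:ℝ)^(n+1+10) = 2^(n+4) * 128 := by
        rw [show n+1+10 = (n+4)+7 by omega, pow_add]
        norm_num
      push_cast
      field_simp
      rw [h1]
      ring
    have hncast : (0:ℝ) ≤ (n:ℝ) := Nat.cast_nonneg n
    rcases le_or_gt (TbF δ n / 4) (Iseg P ξ (xs n) (ts n) (gs (n+1)) (xs (n+1))) with hc | hc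
    · -- segment case
      have c1 : ((n:ℝ)+1) ≤ xs n * Iseg P ξ (xs n) (ts n) (gs (n+1)) (xs (n+1)) := by
        have m1 : xs n * (TbF δ n / 4) ≤ xs n * Iseg P ξ (xs n) (ts n) (gs (n+1)) (xs (n+1)) :=
          mul_le_mul_of_nonneg_left hc hxs_nn
        have m2 : BigF δ n * TbF δ n ≤ xs n * TbF δ n :=
          mul_le_mul_of_nonneg_right (hbig n) hTpos.le
        nlinarith
      calc ENNReal.ofReal ((n:ℝ)+1)
          ≤ ENNReal.ofReal (xs n * Iseg P ξ (xs n) (ts n) (gs (n+1)) (xs (n+1))) :=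
            ENNReal.ofReal_le_ofReal c1
        _ = ENNReal.ofReal (xs n) * ENNReal.ofReal (Iseg P ξ (xs n) (ts n) (gs (n+1)) (xs (n+1))) :=
            ENNReal.ofReal_mul hxs_nn
        _ = ENNReal.ofReal (xs n)
            * ∫⁻ ω in A (n+1), ENNReal.ofReal (Real.exp (hfun gs hex (ξ ω))) ∂P := by
            rw [hpiece n]
        _ = ∫⁻ ω in A (n+1), ENNReal.ofReal (xs n)
            * ENNReal.ofReal (Real.exp (hfun gs hex (ξ ω))) ∂P :=
            (lintegral_const_mul _ hfm1).symm
        _ ≤ ∫⁻ ω in A (n+1), ENNReal.ofReal (ξ ω * Real.exp (hfun gs hex (ξ ω))) ∂P := by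
            apply setLIntegral_mono hfm2
            intro ω hω
            rw [hAs n] at hω
            rw [← ENNReal.ofReal_mul hxs_nn]
            apply ENNReal.ofReal_le_ofReal
            apply mul_le_mul_of_nonneg_right hω.1.le (Real.exp_nonneg _)
        _ ≤ ∫⁻ ω, ENNReal.ofReal (ξ ω * Real.exp (hfun gs hex (ξ ω))) ∂P :=
            setLIntegral_le_lintegral _ _
    · -- tail case
      have htail_ge : TbF δ n / 64 ≤ Real.exp (ts (n+1)) * TailR P ξ (xs (n+1)) := by
        have hIseg0 : 0 ≤ Iseg P ξ (xs n) (ts n) (gs (n+1)) (xs (n+1)) :=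
          Iseg_nonneg hmeas _ _ _ _
        linarith [hIeq n]
      have c1 : ((n:ℝ)+1) ≤ xs (n+1) * (Real.exp (ts (n+1)) * TailR P ξ (xs (n+1))) := by
        have m1 : xs (n+1) * (TbF δ n / 64)
            ≤ xs (n+1) * (Real.exp (ts (n+1)) * TailR P ξ (xs (n+1))) :=
          mul_le_mul_of_nonneg_left htail_ge hxs1_nn
        have m2 : BigF δ (n+1) * TbF δ n ≤ xs (n+1) * TbF δ n :=
          mul_le_mul_of_nonneg_right (hbig (n+1)) hTpos.le
        nlinarith
      calc ENNReal.ofReal ((n:ℝ)+1)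
          ≤ ENNReal.ofReal (xs (n+1) * (Real.exp (ts (n+1)) * TailR P ξ (xs (n+1)))) :=
            ENNReal.ofReal_le_ofReal c1
        _ = ENNReal.ofReal (xs (n+1) * Real.exp (ts (n+1)))
            * ENNReal.ofReal (TailR P ξ (xs (n+1))) := by
            rw [show xs (n+1) * (Real.exp (ts (n+1)) * TailR P ξ (xs (n+1)))
              = (xs (n+1) * Real.exp (ts (n+1))) * TailR P ξ (xs (n+1)) from by ring,
              ENNReal.ofReal_mul (by positivity)]
        _ = ENNReal.ofReal (xs (n+1) * Real.exp (ts (n+1))) * P {ω | xs (n+1) < ξ ω} := by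
            rw [show TailR P ξ (xs (n+1)) = (P {ω | xs (n+1) < ξ ω}).toReal from rfl,
              ENNReal.ofReal_toReal (measure_ne_top _ _)]
        _ = ∫⁻ _ω in {ω | xs (n+1) < ξ ω}, ENNReal.ofReal (xs (n+1) * Real.exp (ts (n+1))) ∂P :=
            (setLIntegral_const _ _).symm
        _ ≤ ∫⁻ ω in {ω | xs (n+1) < ξ ω}, ENNReal.ofReal (ξ ω * Real.exp (hfun gs hex (ξ ω))) ∂P := by
            apply setLIntegral_mono hfm2
            intro ω hω
            apply ENNReal.ofReal_le_ofReal
            have hmem : xs (n+1) < ξ ω := hω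
            have hh : ts (n+1) ≤ hfun gs hex (ξ ω) := by
              rw [← hval (n+1)]
              exact hfun_mono hex hgdec hgpos hmem.le
            apply mul_le_mul hmem.le (Real.exp_le_exp.2 hh) (Real.exp_nonneg _)
              (le_trans hxs1_nn hmem.le)
        _ ≤ ∫⁻ ω, ENNReal.ofReal (ξ ω * Real.exp (hfun gs hex (ξ ω))) ∂P :=
            setLIntegral_le_lintegral _ _
  refine ⟨hfun gs hex, fun y hy => hfun_nonneg hex hgdec hgpos hy,
    fun X Y hY hXY => hfun_subadd hex hgdec hY hXY, htend, hbudget, ?_⟩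
  by_contra hne
  obtain ⟨n, hn⟩ := exists_nat_gt
    ((∫⁻ ω, ENNReal.ofReal (ξ ω * Real.exp (hfun gs hex (ξ ω))) ∂P).toReal)
  have h1 := hdiv n
  have h2 : ((n:ℝ)+1) ≤ (∫⁻ ω, ENNReal.ofReal (ξ ω * Real.exp (hfun gs hex (ξ ω))) ∂P).toReal := by
    have := ENNReal.toReal_mono hne h1
    rwa [ENNReal.toReal_ofReal (by positivity)] at this
  linarith
end
end

section
/- For any heavy-tailed distribution F on [0,∞), liminf_{x→∞} (1 - F*F(x)) / (1 - F(x)) = 2. -/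
open MeasureTheory Filter Real Set
open scoped ENNReal Topology

noncomputable section

lemma aux_layer {α : Type*} [MeasurableSpace α] (ν : Measure α) [IsProbabilityMeasure ν]
    {γ : ℝ} (hγ : 0 < γ) {V : α → ℝ} (hV : Measurable V) (hnn : ∀ᵐ a ∂ν, 0 ≤ V a) :
    ∫⁻ a, ENNReal.ofReal (Real.exp (γ * V a)) ∂ν
      = 1 + ∫⁻ t in Ioi (0:ℝ), ν {a | t < V a} * ENNReal.ofReal (γ * Real.exp (γ * t)) := by
  have gint : ∀ t > (0:ℝ), IntervalIntegrable (fun s => γ * Real.exp (γ*s)) volume 0 t :=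
    fun t _ => (Continuous.intervalIntegrable (by continuity) 0 t)
  have gnn : ∀ᵐ t ∂(volume.restrict (Ioi (0:ℝ))), 0 ≤ γ * Real.exp (γ*t) :=
    ae_of_all _ fun t => by positivity
  have key := lintegral_comp_eq_lintegral_meas_lt_mul ν hnn hV.aemeasurable gint gnn
  have hint : ∀ w : ℝ, (∫ s in (0:ℝ)..w, γ * Real.exp (γ*s)) = Real.exp (γ*w) - 1 := by
    intro w
    rw [intervalIntegral.integral_const_mul]
    have h2 : (∫ s in (0:ℝ)..w, Real.exp (γ*s)) = γ⁻¹ • ∫ x in (γ*0)..(γ*w), Real.exp x :=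
      intervalIntegral.integral_comp_mul_left _ hγ.ne'
    rw [h2, integral_exp]
    rw [mul_zero, Real.exp_zero]
    rw [smul_eq_mul, ← mul_assoc, mul_inv_cancel₀ hγ.ne', one_mul]
  simp_rw [hint] at key
  rw [← key]
  have congrae : ∀ᵐ a ∂ν, ENNReal.ofReal (Real.exp (γ * V a))
      = 1 + ENNReal.ofReal (Real.exp (γ * V a) - 1) := by
    filter_upwards [hnn] with a ha
    have h1 : (1:ℝ) ≤ Real.exp (γ * V a) := Real.one_le_exp (by positivity)
    have h2 := ENNReal.ofReal_add (p := 1) (q := Real.exp (γ * V a) - 1) zero_le_one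
      (by linarith)
    rw [ENNReal.ofReal_one] at h2
    rw [← h2]
    norm_num
  rw [lintegral_congr_ae congrae, lintegral_add_left measurable_const, lintegral_const,
    measure_univ, mul_one]




def Ift (F : Measure ℝ) (γ T : ℝ) : ℝ≥0∞ :=
  ∫⁻ t in Ioo (0:ℝ) T, tail F t * ENNReal.ofReal (γ * Real.exp (γ * t))

def psi (F : Measure ℝ) (γ T : ℝ) : ℝ≥0∞ :=
  ∫⁻ x, ENNReal.ofReal (Real.exp (γ * min x T)) ∂F

lemma tail_measurable (F : Measure ℝ) : Measurable (tail F) :=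
  Antitone.measurable (fun a b hab => measure_mono (Ioi_subset_Ioi hab))

lemma tail_mconv (F : Measure ℝ) [IsProbabilityMeasure F] (x : ℝ) :
    tail (mconv F F) x = (F.prod F) {p : ℝ × ℝ | x < p.1 + p.2} := by
  rw [tail, mconv, Measure.map_apply (by fun_prop : Measurable fun p : ℝ × ℝ => p.1 + p.2) measurableSet_Ioi]
  rfl

lemma ae_nonneg (F : Measure ℝ) (hsupp : F (Set.Iio 0) = 0) : ∀ᵐ x ∂F, 0 ≤ x := by
  rw [ae_iff]
  convert hsupp using 2
  ext x; simp

lemma psi_eq (F : Measure ℝ) [IsProbabilityMeasure F] (hsupp : F (Set.Iio 0) = 0)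
    {γ : ℝ} (hγ : 0 < γ) {T : ℝ} (hT : 0 ≤ T) :
    psi F γ T = 1 + Ift F γ T := by
  have hV : Measurable (fun x : ℝ => min x T) := measurable_id.min measurable_const
  have hnn : ∀ᵐ x ∂F, 0 ≤ min x T := by
    filter_upwards [ae_nonneg F hsupp] with x hx
    exact le_min hx hT
  rw [psi, aux_layer F hγ hV hnn]
  congr 1
  have hcongr : ∀ t ∈ Ioi (0:ℝ), F {x | t < min x T} * ENNReal.ofReal (γ * Real.exp (γ * t))
      = (Ioo (0:ℝ) T).indicator
          (fun t => tail F t * ENNReal.ofReal (γ * Real.exp (γ * t))) t := by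
    intro t ht
    by_cases h : t < T
    · rw [indicator_of_mem (show t ∈ Ioo (0:ℝ) T from ⟨ht, h⟩)]
      congr 2
      ext x
      simp [lt_min_iff, h]
    · rw [indicator_of_notMem (by simp [h])]
      have : {x : ℝ | t < min x T} = ∅ := by
        ext x
        simp only [mem_setOf_eq, mem_empty_iff_false, iff_false, not_lt]
        exact le_trans (min_le_right x T) (not_lt.1 h)
      rw [this, measure_empty, zero_mul]
  rw [setLIntegral_congr_fun measurableSet_Ioi hcongr,
    lintegral_indicator measurableSet_Ioo, Measure.restrict_restrict measurableSet_Ioo]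
  rw [show Ioo (0:ℝ) T ∩ Ioi 0 = Ioo 0 T by
    rw [inter_eq_left]; exact fun t ht => ht.1]
  rfl

lemma Ift_mono (F : Measure ℝ) (γ : ℝ) {T T' : ℝ} (h : T ≤ T') :
    Ift F γ T ≤ Ift F γ T' :=
  lintegral_mono_set (Ioo_subset_Ioo_right h)

lemma psi_mult (F : Measure ℝ) {γ : ℝ} (hγ : 0 < γ) {T T' : ℝ} (h : T ≤ T') :
    psi F γ T' ≤ ENNReal.ofReal (Real.exp (γ * (T' - T))) * psi F γ T := by
  rw [psi, psi, ← lintegral_const_mul' _ _ ENNReal.ofReal_ne_top]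
  apply lintegral_mono
  intro x
  have h1 : min x T' ≤ min x T + (T' - T) := by
    rcases le_total x T with hx | hx
    · have h2 := min_le_left x T'
      rw [min_eq_left hx]
      linarith
    · have h2 := min_le_right x T'
      rw [min_eq_right hx]
      linarith
  calc ENNReal.ofReal (Real.exp (γ * min x T'))
      ≤ ENNReal.ofReal (Real.exp (γ * (T' - T)) * Real.exp (γ * min x T)) := by
        rw [← Real.exp_add]
        apply ENNReal.ofReal_le_ofReal
        apply Real.exp_le_exp.2
        nlinarith [h1, hγ.le]
    _ = ENNReal.ofReal (Real.exp (γ * (T' - T))) * ENNReal.ofReal (Real.exp (γ * min x T)) :=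
        ENNReal.ofReal_mul (Real.exp_nonneg _)

lemma aux_prod (F : Measure ℝ) [IsProbabilityMeasure F] (γ T : ℝ) :
    ∫⁻ p : ℝ × ℝ, ENNReal.ofReal (Real.exp (γ * (min p.1 T + min p.2 T))) ∂(F.prod F)
      = psi F γ T * psi F γ T := by
  have hm : AEMeasurable (fun x : ℝ => ENNReal.ofReal (Real.exp (γ * min x T))) F :=
    (ENNReal.measurable_ofReal.comp
      (Real.measurable_exp.comp ((measurable_id.min measurable_const).const_mul γ))).aemeasurable
  rw [psi, ← lintegral_prod_mul hm hm]
  congr 1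
  funext p
  rw [← ENNReal.ofReal_mul (Real.exp_nonneg _), ← Real.exp_add, mul_add]

lemma psi_sup (F : Measure ℝ) {γ : ℝ} (hγ : 0 < γ) :
    ⨆ n : ℕ, psi F γ (n : ℝ) = phi F γ := by
  have hmeas : ∀ n : ℕ, Measurable fun x : ℝ => ENNReal.ofReal (Real.exp (γ * min x (n:ℝ))) :=
    fun n => ENNReal.measurable_ofReal.comp
      (Real.measurable_exp.comp ((measurable_id.min measurable_const).const_mul γ))
  have hmono : Monotone fun (n : ℕ) (x : ℝ) => ENNReal.ofReal (Real.exp (γ * min x (n:ℝ))) := by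
    intro n m hnm
    intro x
    exact ENNReal.ofReal_le_ofReal (Real.exp_le_exp.2
      (mul_le_mul_of_nonneg_left (le_min (min_le_left _ _)
        (le_trans (min_le_right _ _) (Nat.cast_le.2 hnm))) hγ.le))
  simp only [psi, phi]
  rw [← lintegral_iSup hmeas hmono]
  apply lintegral_congr
  intro x
  apply le_antisymm
  · apply iSup_le
    intro n
    exact ENNReal.ofReal_le_ofReal (Real.exp_le_exp.2
      (mul_le_mul_of_nonneg_left (min_le_left _ _) hγ.le))
  · apply le_iSup_of_le ⌈x⌉₊
    rw [min_eq_left (Nat.le_ceil x)]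

lemma exists_big (F : Measure ℝ) [IsProbabilityMeasure F] (hsupp : F (Set.Iio 0) = 0)
    {γ : ℝ} (hγ : 0 < γ) (hheavy : phi F γ = ⊤) {c : ℝ≥0∞} (hc : c ≠ ⊤) :
    ∃ T : ℝ, 0 ≤ T ∧ c < Ift F γ T := by
  by_contra hcon
  push_neg at hcon
  have hb : ∀ n : ℕ, psi F γ (n:ℝ) ≤ 1 + c := by
    intro n
    rw [psi_eq F hsupp hγ (Nat.cast_nonneg n)]
    exact add_le_add_right (hcon _ (Nat.cast_nonneg n)) 1
  have h2 : phi F γ ≤ 1 + c := by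
    rw [← psi_sup F hγ]
    exact iSup_le hb
  rw [hheavy] at h2
  exact absurd (le_antisymm le_top h2) (by simp [ENNReal.add_ne_top, hc])


lemma key (F : Measure ℝ) [IsProbabilityMeasure F] (hsupp : F (Set.Iio 0) = 0)
    (hheavy : IsHeavyTailed F) {ε X : ℝ} (hε : 0 < ε) (hX : 0 < X)
    (H : ∀ x : ℝ, X ≤ x → ENNReal.ofReal (2+ε) * tail F x ≤ tail (mconv F F) x) : False := by
  classical
  set η : ℝ := ε^2/(16*(2+ε)) with hηdef
  have hηpos : 0 < η := by positivity
  set γ : ℝ := min 1 (η/(X * Real.exp X)) with hγdef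
  have hγ : 0 < γ := lt_min one_pos (by positivity)
  have hγ1 : γ ≤ 1 := min_le_left _ _
  have hγ2 : γ * (X * Real.exp X) ≤ η := by
    have h0 : γ ≤ η/(X * Real.exp X) := min_le_right _ _
    have h1 : 0 < X * Real.exp X := by positivity
    calc γ * (X * Real.exp X) ≤ (η/(X * Real.exp X)) * (X * Real.exp X) :=
          mul_le_mul_of_nonneg_right h0 h1.le
      _ = η := div_mul_cancel₀ _ h1.ne'
  have hγX : γ * Real.exp (γ * X) * X ≤ η := by
    have h1 : Real.exp (γ * X) ≤ Real.exp X := Real.exp_le_exp.2 (by nlinarith)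
    nlinarith [Real.exp_pos (γ * X), Real.exp_pos X]
  have hC0 : ∫⁻ t in Ioc (0:ℝ) X, ENNReal.ofReal (γ * Real.exp (γ * t)) ≤ ENNReal.ofReal η := by
    calc ∫⁻ t in Ioc (0:ℝ) X, ENNReal.ofReal (γ * Real.exp (γ * t))
        ≤ ∫⁻ _t in Ioc (0:ℝ) X, ENNReal.ofReal (γ * Real.exp (γ * X)) := by
          apply setLIntegral_mono' measurableSet_Ioc
          intro t ht
          apply ENNReal.ofReal_le_ofReal
          have h2 := Real.exp_le_exp.2 (mul_le_mul_of_nonneg_left ht.2 hγ.le)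
          nlinarith [Real.exp_pos (γ * t)]
      _ = ENNReal.ofReal (γ * Real.exp (γ * X)) * volume (Ioc (0:ℝ) X) :=
          setLIntegral_const _ _
      _ = ENNReal.ofReal (γ * Real.exp (γ * X)) * ENNReal.ofReal X := by
          rw [Real.volume_Ioc, sub_zero]
      _ = ENNReal.ofReal (γ * Real.exp (γ * X) * X) := by
          rw [← ENNReal.ofReal_mul (by positivity)]
      _ ≤ ENNReal.ofReal η := ENNReal.ofReal_le_ofReal hγX
  obtain ⟨T₀, hT₀0, hT₀⟩ := exists_big F hsupp hγ (hheavy γ hγ)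
    (c := ENNReal.ofReal (ε/2)) ENNReal.ofReal_ne_top
  set SS : Set ℝ := {T | 0 ≤ T ∧ Ift F γ T ≤ ENNReal.ofReal (ε/2)} with hSSdef
  have hIft0 : Ift F γ 0 = 0 := by simp [Ift, Ioo_self]
  have h0S : (0:ℝ) ∈ SS := ⟨le_refl 0, by rw [hIft0]; exact zero_le⟩
  have hSbdd : BddAbove SS := by
    refine ⟨T₀, fun T hT => ?_⟩
    by_contra hc
    push_neg at hc
    exact absurd (le_trans (Ift_mono F γ hc.le) hT.2) (not_le.2 hT₀)
  set ts : ℝ := sSup SS with htsdef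
  have hts0 : 0 ≤ ts := le_csSup hSbdd h0S
  set δ : ℝ := Real.log ((1+3*ε/4)/(1+ε/2)) / (2*γ) with hδdef
  have hratio : (1:ℝ) < (1+3*ε/4)/(1+ε/2) := by
    rw [lt_div_iff₀ (by linarith)]
    linarith
  have hδ : 0 < δ := div_pos (Real.log_pos hratio) (by positivity)
  have hexp2γδ : Real.exp (2*γ*δ) * (1+ε/2) = 1+3*ε/4 := by
    rw [hδdef, show 2*γ*(Real.log ((1+3*ε/4)/(1+ε/2)) / (2*γ)) =
      Real.log ((1+3*ε/4)/(1+ε/2)) by field_simp,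
      Real.exp_log (by linarith), div_mul_cancel₀ _ (by linarith : (1:ℝ)+ε/2 ≠ 0)]
  set T₁ : ℝ := max (ts - δ) 0 with hT₁def
  have hT₁nonneg : (0:ℝ) ≤ T₁ := le_max_right _ _
  have hT₁small : Ift F γ T₁ ≤ ENNReal.ofReal (ε/2) := by
    rcases le_or_gt (ts - δ) 0 with h | h
    · rw [hT₁def, max_eq_right h, hIft0]
      exact zero_le
    · have hT₁eq : T₁ = ts - δ := max_eq_left h.le
      have hlt : T₁ < ts := by rw [hT₁eq]; linarith
      obtain ⟨c, hcS, hcgt⟩ := exists_lt_of_lt_csSup ⟨0, h0S⟩ hlt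
      exact le_trans (Ift_mono F γ hcgt.le) hcS.2
  set T₂ : ℝ := ts + δ with hT₂def
  have hT₂pos : 0 < T₂ := by positivity
  have hT₂big : ENNReal.ofReal (ε/2) < Ift F γ T₂ := by
    by_contra hc
    push_neg at hc
    have hmem : T₂ ∈ SS := ⟨by positivity, hc⟩
    have := le_csSup hSbdd hmem
    have h2 : ts + δ ≤ ts := this
    linarith
  set u : ℝ≥0∞ := Ift F γ T₂ with hudef
  have hT₁₂ : T₁ ≤ T₂ := max_le (by linarith) (by positivity)
  have hdiff : γ * (T₂ - T₁) ≤ 2*γ*δ := by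
    have := le_max_left (ts - δ) 0
    nlinarith
  have hupper : 1 + u ≤ 1 + ENNReal.ofReal (3*ε/4) := by
    calc 1 + u = psi F γ T₂ := (psi_eq F hsupp hγ hT₂pos.le).symm
      _ ≤ ENNReal.ofReal (Real.exp (γ*(T₂-T₁))) * psi F γ T₁ := psi_mult F hγ hT₁₂
      _ ≤ ENNReal.ofReal (Real.exp (2*γ*δ)) * psi F γ T₁ :=
          mul_le_mul_left (ENNReal.ofReal_le_ofReal (Real.exp_le_exp.2 hdiff)) _
      _ = ENNReal.ofReal (Real.exp (2*γ*δ)) * (1 + Ift F γ T₁) := by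
          rw [psi_eq F hsupp hγ hT₁nonneg]
      _ ≤ ENNReal.ofReal (Real.exp (2*γ*δ)) * (1 + ENNReal.ofReal (ε/2)) :=
          mul_le_mul_right (add_le_add_right hT₁small 1) _
      _ = ENNReal.ofReal (Real.exp (2*γ*δ)) * ENNReal.ofReal (1 + ε/2) := by
          rw [ENNReal.ofReal_add zero_le_one (by positivity), ENNReal.ofReal_one]
      _ = ENNReal.ofReal (Real.exp (2*γ*δ) * (1 + ε/2)) :=
          (ENNReal.ofReal_mul (Real.exp_nonneg _)).symm
      _ = ENNReal.ofReal (1 + 3*ε/4) := by rw [hexp2γδ]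
      _ = 1 + ENNReal.ofReal (3*ε/4) := by
          rw [ENNReal.ofReal_add zero_le_one (by positivity), ENNReal.ofReal_one]
  have huε : u ≤ ENNReal.ofReal (3*ε/4) :=
    (ENNReal.add_le_add_iff_left ENNReal.one_ne_top).1 hupper
  have hune : u ≠ ⊤ := ne_top_of_le_ne_top ENNReal.ofReal_ne_top huε
  -- W machinery
  set μ : Measure (ℝ × ℝ) := F.prod F with hμdef
  have hbad1 : μ ((Iio (0:ℝ)) ×ˢ (univ : Set ℝ)) = 0 := by
    rw [hμdef, Measure.prod_prod, hsupp, zero_mul]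
  have hbad2 : μ ((univ : Set ℝ) ×ˢ (Iio (0:ℝ))) = 0 := by
    rw [hμdef, Measure.prod_prod, hsupp, mul_zero]
  have hWmeas : Measurable (fun p : ℝ × ℝ => min p.1 T₂ + min p.2 T₂) :=
    (measurable_fst.min measurable_const).add (measurable_snd.min measurable_const)
  have haenn : ∀ᵐ p ∂μ, 0 ≤ p.1 ∧ 0 ≤ p.2 := by
    rw [ae_iff]
    refine measure_mono_null ?_ (measure_union_null hbad1 hbad2)
    intro p hp
    simp only [mem_setOf_eq, not_and, not_le] at hp
    by_cases h1 : 0 ≤ p.1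
    · exact Or.inr ⟨mem_univ _, hp h1⟩
    · exact Or.inl ⟨not_le.1 h1, mem_univ _⟩
  have hWnn : ∀ᵐ p ∂μ, 0 ≤ min p.1 T₂ + min p.2 T₂ := by
    filter_upwards [haenn] with p hp
    have := le_min hp.1 hT₂pos.le
    have := le_min hp.2 hT₂pos.le
    linarith
  have hlayer := aux_layer μ hγ hWmeas hWnn
  have hprod := aux_prod F γ T₂
  have hSW : (1:ℝ≥0∞) + (∫⁻ t in Ioi (0:ℝ),
        μ {p : ℝ × ℝ | t < min p.1 T₂ + min p.2 T₂} * ENNReal.ofReal (γ * Real.exp (γ * t)))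
      = psi F γ T₂ * psi F γ T₂ := hlayer.symm.trans hprod
  -- lower bound by convolution tail
  have hGW : ∀ t ∈ Ioo (0:ℝ) T₂,
      tail (mconv F F) t ≤ μ {p : ℝ × ℝ | t < min p.1 T₂ + min p.2 T₂} := by
    intro t ht
    rw [tail_mconv F t]
    have hsub : {p : ℝ × ℝ | t < p.1 + p.2} ⊆ {p : ℝ × ℝ | t < min p.1 T₂ + min p.2 T₂}
        ∪ (((Iio (0:ℝ)) ×ˢ (univ : Set ℝ)) ∪ ((univ : Set ℝ) ×ˢ (Iio (0:ℝ)))) := by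
      intro p hp
      by_cases h1 : 0 ≤ p.1
      · by_cases h2 : 0 ≤ p.2
        · left
          have hm1 : 0 ≤ min p.1 T₂ := le_min h1 hT₂pos.le
          have hm2 : 0 ≤ min p.2 T₂ := le_min h2 hT₂pos.le
          rcases le_or_gt p.1 T₂ with hc1 | hc1
          · rcases le_or_gt p.2 T₂ with hc2 | hc2
            · show t < min p.1 T₂ + min p.2 T₂
              rw [min_eq_left hc1, min_eq_left hc2]
              exact hp
            · show t < min p.1 T₂ + min p.2 T₂
              rw [min_eq_right hc2.le]
              have := ht.2
              linarith
          · show t < min p.1 T₂ + min p.2 T₂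
            rw [min_eq_right hc1.le]
            have := ht.2
            linarith
        · exact Or.inr (Or.inr ⟨mem_univ _, not_le.1 h2⟩)
      · exact Or.inr (Or.inl ⟨not_le.1 h1, mem_univ _⟩)
    calc μ {p : ℝ × ℝ | t < p.1 + p.2} ≤ μ ({p : ℝ × ℝ | t < min p.1 T₂ + min p.2 T₂}
          ∪ (((Iio (0:ℝ)) ×ˢ (univ : Set ℝ)) ∪ ((univ : Set ℝ) ×ˢ (Iio (0:ℝ))))) :=
        measure_mono hsub
      _ ≤ μ {p : ℝ × ℝ | t < min p.1 T₂ + min p.2 T₂}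
          + μ (((Iio (0:ℝ)) ×ˢ (univ : Set ℝ)) ∪ ((univ : Set ℝ) ×ˢ (Iio (0:ℝ)))) :=
        measure_union_le _ _
      _ = μ {p : ℝ × ℝ | t < min p.1 T₂ + min p.2 T₂} := by
        rw [measure_union_null hbad1 hbad2, add_zero]
  have hlow : ∫⁻ t in Ioo (0:ℝ) T₂, tail (mconv F F) t * ENNReal.ofReal (γ * Real.exp (γ * t))
      ≤ ∫⁻ t in Ioi (0:ℝ),
        μ {p : ℝ × ℝ | t < min p.1 T₂ + min p.2 T₂} * ENNReal.ofReal (γ * Real.exp (γ * t)) := by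
    calc ∫⁻ t in Ioo (0:ℝ) T₂, tail (mconv F F) t * ENNReal.ofReal (γ * Real.exp (γ * t))
        ≤ ∫⁻ t in Ioo (0:ℝ) T₂,
          μ {p : ℝ × ℝ | t < min p.1 T₂ + min p.2 T₂} * ENNReal.ofReal (γ * Real.exp (γ * t)) :=
        setLIntegral_mono' measurableSet_Ioo (fun t ht => mul_le_mul_left (hGW t ht) _)
      _ ≤ _ := lintegral_mono_set Ioo_subset_Ioi_self
  -- split inequality
  have hsplit : ENNReal.ofReal (2+ε) * u ≤ ENNReal.ofReal (ε^2/16)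
      + ∫⁻ t in Ioo (0:ℝ) T₂, tail (mconv F F) t * ENNReal.ofReal (γ * Real.exp (γ * t)) := by
    have hmul : ENNReal.ofReal (2+ε) * u = ∫⁻ t in Ioo (0:ℝ) T₂,
        ENNReal.ofReal (2+ε) * (tail F t * ENNReal.ofReal (γ * Real.exp (γ * t))) :=
      (lintegral_const_mul' _ _ ENNReal.ofReal_ne_top).symm
    have hdecomp : Ioo (0:ℝ) T₂ = (Ioo (0:ℝ) T₂ ∩ Iic X) ∪ (Ioo (0:ℝ) T₂ ∩ Ioi X) := by
      rw [← inter_union_distrib_left, Iic_union_Ioi, inter_univ]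
    have hdisj : Disjoint (Ioo (0:ℝ) T₂ ∩ Iic X) (Ioo (0:ℝ) T₂ ∩ Ioi X) :=
      Set.disjoint_left.2 (fun t h1 h2 => absurd h1.2 (show ¬ t ≤ X from not_le.2 h2.2))
    have piece1 : ∫⁻ t in Ioo (0:ℝ) T₂ ∩ Iic X,
        ENNReal.ofReal (2+ε) * (tail F t * ENNReal.ofReal (γ * Real.exp (γ * t)))
        ≤ ENNReal.ofReal (ε^2/16) := by
      calc ∫⁻ t in Ioo (0:ℝ) T₂ ∩ Iic X,
            ENNReal.ofReal (2+ε) * (tail F t * ENNReal.ofReal (γ * Real.exp (γ * t)))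
          ≤ ∫⁻ t in Ioo (0:ℝ) T₂ ∩ Iic X,
            ENNReal.ofReal (2+ε) * ENNReal.ofReal (γ * Real.exp (γ * t)) := by
            apply setLIntegral_mono' (measurableSet_Ioo.inter measurableSet_Iic)
            intro t _
            exact mul_le_mul_right (mul_le_of_le_one_left zero_le
              (by rw [← measure_univ (μ := F)]; exact measure_mono (subset_univ _))) _
        _ ≤ ∫⁻ t in Ioc (0:ℝ) X,
            ENNReal.ofReal (2+ε) * ENNReal.ofReal (γ * Real.exp (γ * t)) := by
            apply lintegral_mono_set
            intro t ht
            exact ⟨ht.1.1, ht.2⟩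
        _ = ENNReal.ofReal (2+ε) * ∫⁻ t in Ioc (0:ℝ) X, ENNReal.ofReal (γ * Real.exp (γ * t)) :=
            lintegral_const_mul' _ _ ENNReal.ofReal_ne_top
        _ ≤ ENNReal.ofReal (2+ε) * ENNReal.ofReal η := mul_le_mul_right hC0 _
        _ = ENNReal.ofReal ((2+ε) * η) := (ENNReal.ofReal_mul (by positivity)).symm
        _ = ENNReal.ofReal (ε^2/16) := by
            congr 1
            rw [hηdef]
            field_simp
    have piece2 : ∫⁻ t in Ioo (0:ℝ) T₂ ∩ Ioi X,
        ENNReal.ofReal (2+ε) * (tail F t * ENNReal.ofReal (γ * Real.exp (γ * t)))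
        ≤ ∫⁻ t in Ioo (0:ℝ) T₂,
          tail (mconv F F) t * ENNReal.ofReal (γ * Real.exp (γ * t)) := by
      calc ∫⁻ t in Ioo (0:ℝ) T₂ ∩ Ioi X,
            ENNReal.ofReal (2+ε) * (tail F t * ENNReal.ofReal (γ * Real.exp (γ * t)))
          ≤ ∫⁻ t in Ioo (0:ℝ) T₂ ∩ Ioi X,
            tail (mconv F F) t * ENNReal.ofReal (γ * Real.exp (γ * t)) := by
            apply setLIntegral_mono' (measurableSet_Ioo.inter measurableSet_Ioi)
            intro t ht
            rw [← mul_assoc]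
            exact mul_le_mul_left (H t ht.2.le) _
        _ ≤ ∫⁻ t in Ioo (0:ℝ) T₂,
            tail (mconv F F) t * ENNReal.ofReal (γ * Real.exp (γ * t)) :=
            lintegral_mono_set inter_subset_left
    rw [hmul]
    calc ∫⁻ t in Ioo (0:ℝ) T₂,
          ENNReal.ofReal (2+ε) * (tail F t * ENNReal.ofReal (γ * Real.exp (γ * t)))
        = (∫⁻ t in Ioo (0:ℝ) T₂ ∩ Iic X,
            ENNReal.ofReal (2+ε) * (tail F t * ENNReal.ofReal (γ * Real.exp (γ * t))))
          + ∫⁻ t in Ioo (0:ℝ) T₂ ∩ Ioi X,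
            ENNReal.ofReal (2+ε) * (tail F t * ENNReal.ofReal (γ * Real.exp (γ * t))) := by
          rw [← lintegral_union (measurableSet_Ioo.inter measurableSet_Ioi) hdisj, ← hdecomp]
      _ ≤ ENNReal.ofReal (ε^2/16) + ∫⁻ t in Ioo (0:ℝ) T₂,
            tail (mconv F F) t * ENNReal.ofReal (γ * Real.exp (γ * t)) :=
          add_le_add piece1 piece2
  -- assemble
  have hfinal : (1:ℝ≥0∞) + ENNReal.ofReal (2+ε) * u
      ≤ ENNReal.ofReal (ε^2/16) + (1 + u) * (1 + u) := by
    calc (1:ℝ≥0∞) + ENNReal.ofReal (2+ε) * u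
        ≤ 1 + (ENNReal.ofReal (ε^2/16) + ∫⁻ t in Ioo (0:ℝ) T₂,
            tail (mconv F F) t * ENNReal.ofReal (γ * Real.exp (γ * t))) :=
          add_le_add_right hsplit 1
      _ ≤ 1 + (ENNReal.ofReal (ε^2/16) + ∫⁻ t in Ioi (0:ℝ),
            μ {p : ℝ × ℝ | t < min p.1 T₂ + min p.2 T₂}
              * ENNReal.ofReal (γ * Real.exp (γ * t))) :=
          add_le_add_right (add_le_add_right hlow _) 1
      _ = ENNReal.ofReal (ε^2/16) + (1 + ∫⁻ t in Ioi (0:ℝ),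
            μ {p : ℝ × ℝ | t < min p.1 T₂ + min p.2 T₂}
              * ENNReal.ofReal (γ * Real.exp (γ * t))) := by ring
      _ = ENNReal.ofReal (ε^2/16) + psi F γ T₂ * psi F γ T₂ := by rw [hSW]
      _ = ENNReal.ofReal (ε^2/16) + (1 + u) * (1 + u) := by
          rw [psi_eq F hsupp hγ hT₂pos.le]
  -- pass to reals
  set v : ℝ := u.toReal with hvdef
  have hv1 : ε/2 < v := by
    have := (ENNReal.ofReal_lt_iff_lt_toReal (by positivity) hune).1 hT₂big
    exact this
  have hv2 : v ≤ 3*ε/4 := ENNReal.toReal_le_of_le_ofReal (by positivity) huε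
  have h1u : (1:ℝ≥0∞) + u ≠ ⊤ := by
    simp [hune]
  have hrhs_ne : ENNReal.ofReal (ε^2/16) + (1 + u) * (1 + u) ≠ ⊤ := by
    apply ENNReal.add_ne_top.2
    exact ⟨ENNReal.ofReal_ne_top, ENNReal.mul_ne_top h1u h1u⟩
  have hreal := ENNReal.toReal_mono hrhs_ne hfinal
  have hlhs_eq : ((1:ℝ≥0∞) + ENNReal.ofReal (2+ε) * u).toReal = 1 + (2+ε) * v := by
    rw [ENNReal.toReal_add ENNReal.one_ne_top
        (ENNReal.mul_ne_top ENNReal.ofReal_ne_top hune),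
      ENNReal.toReal_one, ENNReal.toReal_mul, ENNReal.toReal_ofReal (by positivity)]
  have hrhs_eq : (ENNReal.ofReal (ε^2/16) + (1 + u) * (1 + u)).toReal
      = ε^2/16 + (1 + v) * (1 + v) := by
    rw [ENNReal.toReal_add ENNReal.ofReal_ne_top (ENNReal.mul_ne_top h1u h1u),
      ENNReal.toReal_ofReal (by positivity), ENNReal.toReal_mul,
      ENNReal.toReal_add ENNReal.one_ne_top hune, ENNReal.toReal_one]
  rw [hlhs_eq, hrhs_eq] at hreal
  nlinarith [hv1, hv2, hε, hreal]

lemma ratio_lb (F : Measure ℝ) [IsProbabilityMeasure F] (hsupp : F (Set.Iio 0) = 0)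
    (hub : ∀ x : ℝ, tail F x ≠ 0) (x : ℝ) :
    2 - tail F x ≤ tail (mconv F F) x / tail F x := by
  set a := tail F x with hadef
  have hane : a ≠ ⊤ := measure_ne_top F _
  set μ : Measure (ℝ × ℝ) := F.prod F with hμdef
  have hbad1 : μ ((Iio (0:ℝ)) ×ˢ (univ : Set ℝ)) = 0 := by
    rw [hμdef, Measure.prod_prod, hsupp, zero_mul]
  have hbad2 : μ ((univ : Set ℝ) ×ˢ (Iio (0:ℝ))) = 0 := by
    rw [hμdef, Measure.prod_prod, hsupp, mul_zero]
  set A : Set (ℝ × ℝ) := (Ioi x) ×ˢ (univ : Set ℝ) with hAdef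
  set B : Set (ℝ × ℝ) := (univ : Set ℝ) ×ˢ (Ioi x) with hBdef
  have hμA : μ A = a := by rw [hAdef, hμdef, Measure.prod_prod, measure_univ, mul_one]; rfl
  have hμB : μ B = a := by rw [hBdef, hμdef, Measure.prod_prod, measure_univ, one_mul]; rfl
  have hμAB : μ (A ∩ B) = a * a := by
    rw [hAdef, hBdef, Set.prod_inter_prod, inter_univ, univ_inter, hμdef, Measure.prod_prod]
    rfl
  have hincl : A ∪ B ⊆ {p : ℝ × ℝ | x < p.1 + p.2}
      ∪ (((Iio (0:ℝ)) ×ˢ (univ : Set ℝ)) ∪ ((univ : Set ℝ) ×ˢ (Iio (0:ℝ)))) := by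
    rintro p (hp | hp)
    · by_cases h2 : 0 ≤ p.2
      · left
        have : x < p.1 := hp.1
        show x < p.1 + p.2
        linarith
      · exact Or.inr (Or.inr ⟨mem_univ _, not_le.1 h2⟩)
    · by_cases h1 : 0 ≤ p.1
      · left
        have : x < p.2 := hp.2
        show x < p.1 + p.2
        linarith
      · exact Or.inr (Or.inl ⟨not_le.1 h1, mem_univ _⟩)
  have hunion : μ (A ∪ B) ≤ tail (mconv F F) x := by
    rw [tail_mconv F x]
    calc μ (A ∪ B) ≤ μ ({p : ℝ × ℝ | x < p.1 + p.2}
          ∪ (((Iio (0:ℝ)) ×ˢ (univ : Set ℝ)) ∪ ((univ : Set ℝ) ×ˢ (Iio (0:ℝ))))) :=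
        measure_mono hincl
      _ ≤ μ {p : ℝ × ℝ | x < p.1 + p.2}
          + μ (((Iio (0:ℝ)) ×ˢ (univ : Set ℝ)) ∪ ((univ : Set ℝ) ×ˢ (Iio (0:ℝ)))) :=
        measure_union_le _ _
      _ = μ {p : ℝ × ℝ | x < p.1 + p.2} := by
        rw [measure_union_null hbad1 hbad2, add_zero]
  have hkey : 2 * a ≤ tail (mconv F F) x + a * a := by
    have h1 : μ (A ∪ B) + μ (A ∩ B) = μ A + μ B :=
      measure_union_add_inter A (MeasurableSet.univ.prod measurableSet_Ioi)
    calc 2 * a = μ A + μ B := by rw [hμA, hμB, two_mul]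
      _ = μ (A ∪ B) + μ (A ∩ B) := h1.symm
      _ ≤ tail (mconv F F) x + a * a := add_le_add hunion (le_of_eq hμAB)
  have hsub : (2 - a) * a ≤ tail (mconv F F) x := by
    rw [ENNReal.sub_mul (fun _ _ => hane)]
    rw [tsub_le_iff_right]
    exact hkey
  rw [ENNReal.le_div_iff_mul_le (Or.inl (hub x)) (Or.inl hane)]
  exact hsub


/-- Theorem 1: for heavy-tailed F, liminf (F*F)‾(x)/F̄(x) = 2. -/
theorem stmt2 (F : MeasureTheory.Measure ℝ) [MeasureTheory.IsProbabilityMeasure F]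
    (hsupp : F (Set.Iio 0) = 0) (hub : ∀ x : ℝ, tail F x ≠ 0)
    (hheavy : IsHeavyTailed F) :
    liminf (fun x : ℝ => tail (mconv F F) x / tail F x) atTop = 2 := by
  have htail0 : Tendsto (tail F) atTop (𝓝 0) := by
    have h := tendsto_measure_iInter_atTop (μ := F) (s := fun x : ℝ => Ioi x)
      (fun i => measurableSet_Ioi.nullMeasurableSet) (fun i j hij => Ioi_subset_Ioi hij)
      ⟨0, measure_ne_top F _⟩
    have hempty : ⋂ x : ℝ, Ioi x = ∅ := by
      ext y
      simp only [mem_iInter, mem_Ioi, mem_empty_iff_false, iff_false, not_forall, not_lt]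
      exact ⟨y, le_refl y⟩
    rw [hempty, measure_empty] at h
    exact h
  apply le_antisymm
  · apply ENNReal.le_of_forall_pos_le_add
    intro ε' hε' _
    have hfreq : ∃ᶠ x in atTop, tail (mconv F F) x / tail F x ≤ 2 + (ε' : ℝ≥0∞) := by
      rw [frequently_atTop]
      intro b
      by_contra hcon
      push_neg at hcon
      refine key F hsupp hheavy (ε := (ε' : ℝ)) (X := max b 1)
        (by exact_mod_cast hε') (lt_of_lt_of_le one_pos (le_max_right b 1)) ?_
      intro x hx
      have h2 := hcon x (le_trans (le_max_left b 1) hx)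
      have hofReal : ENNReal.ofReal (2 + (ε' : ℝ)) = 2 + (ε' : ℝ≥0∞) := by
        rw [ENNReal.ofReal_add (by norm_num) ε'.coe_nonneg, ENNReal.ofReal_coe_nnreal]
        norm_num
      rw [hofReal]
      calc (2 + (ε' : ℝ≥0∞)) * tail F x
          ≤ (tail (mconv F F) x / tail F x) * tail F x := mul_le_mul_left h2.le _
        _ = tail (mconv F F) x := ENNReal.div_mul_cancel (hub x) (measure_ne_top F _)
    exact liminf_le_of_frequently_le' hfreq
  · have hev : ∀ᶠ x in atTop,
        (fun y : ℝ => 2 - tail F y) x ≤ tail (mconv F F) x / tail F x :=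
      Eventually.of_forall (fun x => ratio_lb F hsupp hub x)
    have hlim : Tendsto (fun y : ℝ => (2:ℝ≥0∞) - tail F y) atTop (𝓝 2) := by
      have h2 : Tendsto (fun y : ℝ => (2:ℝ≥0∞) - tail F y) atTop (𝓝 (2 - 0)) :=
        ENNReal.Tendsto.sub tendsto_const_nhds htail0 (Or.inl (by norm_num))
      simpa using h2
    calc (2:ℝ≥0∞) = liminf (fun y : ℝ => (2:ℝ≥0∞) - tail F y) atTop := hlim.liminf_eq.symm
      _ ≤ liminf (fun x : ℝ => tail (mconv F F) x / tail F x) atTop := liminf_le_liminf hev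
end
end

section
/- Let F be a heavy-tailed distribution on [0,∞) absolutely continuous with density f with respect to a σ-finite measure μ, and let τ be an independent light-tailed stopping time (E e^{κτ} < ∞ for some κ > 0). If the distribution of S_τ = ξ_1 + ... + ξ_τ has density f^{*τ} with respect to μ, then liminf_{x→∞} f^{*τ}(x)/f(x) ≤ Eτ. -/
open MeasureTheory Filter Real Set
open scoped ENNReal Topology

noncomputable section

lemma lintegral_mconv (ν₁ ν₂ : MeasureTheory.Measure ℝ) [SFinite ν₁] [SFinite ν₂]
    (g : ℝ → ℝ≥0∞) (hg : Measurable g) :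
    ∫⁻ z, g z ∂(mconv ν₁ ν₂) = ∫⁻ x, ∫⁻ y, g (x + y) ∂ν₂ ∂ν₁ := by
  rw [mconv, lintegral_map hg measurable_addfun]
  exact lintegral_prod _ ((hg.comp measurable_addfun).aemeasurable)

lemma convPow_neg_null (F : MeasureTheory.Measure ℝ) [IsProbabilityMeasure F]
    (hF : F (Set.Iio 0) = 0) (n : ℕ) : convPow F n (Set.Iio 0) = 0 := by
  induction n with
  | zero =>
    rw [convPow, MeasureTheory.Measure.dirac_apply' _ measurableSet_Iio]
    simp
  | succ n ih =>
    haveI := convPow_prob F n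
    rw [convPow, mconv, MeasureTheory.Measure.map_apply measurable_addfun measurableSet_Iio]
    have hsub : (fun p : ℝ × ℝ => p.1 + p.2) ⁻¹' (Set.Iio 0) ⊆
        (Set.Iio 0 ×ˢ Set.univ) ∪ (Set.univ ×ˢ Set.Iio 0) := by
      rintro ⟨x, y⟩ h
      simp only [Set.mem_preimage, Set.mem_Iio] at h
      by_contra hc
      simp only [Set.mem_union, Set.mem_prod, Set.mem_univ, Set.mem_Iio, not_or, not_and,
        and_true, true_and, not_lt] at hc
      linarith [hc.1, hc.2]
    refine le_antisymm (le_trans (measure_mono hsub) ?_) (zero_le)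
    refine le_trans (measure_union_le _ _) ?_
    rw [MeasureTheory.Measure.prod_prod, MeasureTheory.Measure.prod_prod, ih, hF]
    simp

/-- `P`: indicator of `[0,t]` times `e^{γx}`. -/
def eP (t γ : ℝ) : ℝ → ℝ≥0∞ :=
  (Set.Icc 0 t).indicator fun x => ENNReal.ofReal (Real.exp (γ * x))

/-- `Q`: indicator of `[0,t]` times `e^{γx} - 1`. -/
def eQ (t γ : ℝ) : ℝ → ℝ≥0∞ :=
  (Set.Icc 0 t).indicator fun x => ENNReal.ofReal (Real.exp (γ * x) - 1)

lemma measurable_eP (t γ : ℝ) : Measurable (eP t γ) :=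
  (measurable_const.mul measurable_id').exp.ennreal_ofReal.indicator measurableSet_Icc

lemma measurable_eQ (t γ : ℝ) : Measurable (eQ t γ) :=
  ((measurable_const.mul measurable_id').exp.sub measurable_const).ennreal_ofReal.indicator
    measurableSet_Icc

lemma eQ_le_eP (t γ : ℝ) (x : ℝ) : eQ t γ x ≤ eP t γ x := by
  unfold eQ eP
  by_cases h : x ∈ Set.Icc 0 t
  · simp only [Set.indicator_of_mem h]
    exact ENNReal.ofReal_le_ofReal (by linarith)
  · simp [Set.indicator_of_notMem h]

lemma eP_le_eQ_add_one (t γ : ℝ) (x : ℝ) :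
    eP t γ x ≤ eQ t γ x + (Set.Icc 0 t).indicator (fun _ => (1 : ℝ≥0∞)) x := by
  unfold eQ eP
  by_cases h : x ∈ Set.Icc 0 t
  · simp only [Set.indicator_of_mem h]
    calc ENNReal.ofReal (Real.exp (γ * x))
        = ENNReal.ofReal ((Real.exp (γ * x) - 1) + 1) := by ring_nf
      _ ≤ ENNReal.ofReal (Real.exp (γ * x) - 1) + ENNReal.ofReal 1 := ENNReal.ofReal_add_le
      _ = ENNReal.ofReal (Real.exp (γ * x) - 1) + 1 := by rw [ENNReal.ofReal_one]
  · simp [Set.indicator_of_notMem h]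

/-- key pointwise subadditivity -/
lemma eQ_add_le (t γ : ℝ) (hγ : 0 ≤ γ) {x y : ℝ} (hx : 0 ≤ x) (hy : 0 ≤ y) :
    eQ t γ (x + y) ≤ eQ t γ x * eP t γ y + eQ t γ y := by
  unfold eQ eP
  by_cases h : x + y ∈ Set.Icc 0 t
  · have hxt : x ∈ Set.Icc 0 t := ⟨hx, by linarith [h.2]⟩
    have hyt : y ∈ Set.Icc 0 t := ⟨hy, by linarith [h.2]⟩
    simp only [Set.indicator_of_mem h, Set.indicator_of_mem hxt, Set.indicator_of_mem hyt]
    have h1 : (0:ℝ) ≤ Real.exp (γ * x) - 1 := by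
      have := Real.one_le_exp (by positivity : 0 ≤ γ * x); linarith
    have h2 : (0:ℝ) ≤ Real.exp (γ * y) - 1 := by
      have := Real.one_le_exp (by positivity : 0 ≤ γ * y); linarith
    rw [← ENNReal.ofReal_mul h1, ← ENNReal.ofReal_add (mul_nonneg h1 (Real.exp_pos _).le) h2]
    refine ENNReal.ofReal_le_ofReal ?_
    have : Real.exp (γ * (x + y)) = Real.exp (γ * x) * Real.exp (γ * y) := by
      rw [← Real.exp_add]; ring_nf
    rw [this]; ring_nf; nlinarith [Real.exp_pos (γ * y)]
  · simp [Set.indicator_of_notMem h]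

lemma ae_nonneg_of_neg_null (ν : MeasureTheory.Measure ℝ) (h : ν (Set.Iio 0) = 0) :
    ∀ᵐ x ∂ν, 0 ≤ x := by
  rw [MeasureTheory.ae_iff]
  convert h using 2
  ext x; simp

lemma lintegral_eQ_convPow (F : MeasureTheory.Measure ℝ) [IsProbabilityMeasure F]
    (hF : F (Set.Iio 0) = 0) (t γ : ℝ) (hγ : 0 ≤ γ) (n : ℕ) :
    ∫⁻ x, eQ t γ x ∂(convPow F n) ≤
      (∫⁻ x, eQ t γ x ∂F) * ∑ j ∈ Finset.range n, (∫⁻ x, eP t γ x ∂F) ^ j := by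
  set ψ := ∫⁻ x, eQ t γ x ∂F with hψ
  set θ := ∫⁻ x, eP t γ x ∂F with hθ
  induction n with
  | zero =>
    rw [convPow, MeasureTheory.lintegral_dirac' _ (measurable_eQ t γ)]
    have : eQ t γ 0 = 0 := by
      unfold eQ
      by_cases h : (0:ℝ) ∈ Set.Icc 0 t
      · simp [Set.indicator_of_mem h]
      · simp [Set.indicator_of_notMem h]
    simp [this]
  | succ n ih =>
    haveI := convPow_prob F n
    rw [convPow, lintegral_mconv _ _ _ (measurable_eQ t γ)]
    have hstep : ∫⁻ x, ∫⁻ y, eQ t γ (x + y) ∂F ∂(convPow F n) ≤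
        ∫⁻ x, (eQ t γ x * θ + ψ) ∂(convPow F n) := by
      refine lintegral_mono_ae ?_
      filter_upwards [ae_nonneg_of_neg_null _ (convPow_neg_null F hF n)] with x hx
      have : ∫⁻ y, eQ t γ (x + y) ∂F ≤ ∫⁻ y, (eQ t γ x * eP t γ y + eQ t γ y) ∂F := by
        refine lintegral_mono_ae ?_
        filter_upwards [ae_nonneg_of_neg_null _ hF] with y hy
        exact eQ_add_le t γ hγ hx hy
      refine this.trans (le_of_eq ?_)
      rw [lintegral_add_right _ (measurable_eQ t γ),
        lintegral_const_mul _ (measurable_eP t γ)]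
    refine hstep.trans ?_
    rw [lintegral_add_left ((measurable_eQ t γ).mul_const θ) _, lintegral_const,
      measure_univ, mul_one, MeasureTheory.lintegral_mul_const _ (measurable_eQ t γ)]
    calc (∫⁻ x, eQ t γ x ∂(convPow F n)) * θ + ψ
        ≤ ψ * (∑ j ∈ Finset.range n, θ ^ j) * θ + ψ := by
          exact add_le_add_left (mul_le_mul_left ih θ) ψ
      _ = ψ * ∑ j ∈ Finset.range (n + 1), θ ^ j := by
          rw [geom_sum_succ]; ring

lemma eP_mono_gamma (t : ℝ) {γ₁ γ₂ : ℝ} (h : γ₁ ≤ γ₂) (x : ℝ) :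
    eP t γ₁ x ≤ eP t γ₂ x := by
  unfold eP
  by_cases hx : x ∈ Set.Icc 0 t
  · simp only [Set.indicator_of_mem hx]
    exact ENNReal.ofReal_le_ofReal (Real.exp_le_exp.2 (mul_le_mul_of_nonneg_right h hx.1))
  · simp [Set.indicator_of_notMem hx]

lemma eP_mono_t {t₁ t₂ : ℝ} (γ : ℝ) (h : t₁ ≤ t₂) (x : ℝ) :
    eP t₁ γ x ≤ eP t₂ γ x :=
  Set.indicator_le_indicator_of_subset (Set.Icc_subset_Icc_right h)
    (fun _ => zero_le) x

lemma eP_shift (t : ℝ) {γ₁ γ₂ : ℝ} (h : γ₂ ≤ γ₁) (x : ℝ) :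
    eP t γ₁ x ≤ ENNReal.ofReal (Real.exp ((γ₁ - γ₂) * t)) * eP t γ₂ x := by
  unfold eP
  by_cases hx : x ∈ Set.Icc 0 t
  · simp only [Set.indicator_of_mem hx]
    rw [← ENNReal.ofReal_mul (Real.exp_pos _).le, ← Real.exp_add]
    refine ENNReal.ofReal_le_ofReal (Real.exp_le_exp.2 ?_)
    nlinarith [hx.1, hx.2]
  · simp [Set.indicator_of_notMem hx]

/-- the truncated Laplace transform reaches ∞ as t → ∞ over naturals -/
lemma exists_trunc_large (F : MeasureTheory.Measure ℝ) [IsProbabilityMeasure F]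
    (hF : F (Set.Iio 0) = 0) (hheavy : IsHeavyTailed F) (γ : ℝ) (hγ : 0 < γ) (M : ℝ≥0∞)
    (hM : M < ⊤) : ∃ n : ℕ, M < ∫⁻ x, eP n γ x ∂F := by
  by_contra hc
  push_neg at hc
  have hsup : ⨆ n : ℕ, ∫⁻ x, eP (n : ℝ) γ x ∂F ≤ M := iSup_le hc
  have hmono : Monotone (fun n : ℕ => eP (n : ℝ) γ) := by
    intro a b hab x
    exact eP_mono_t γ (by exact_mod_cast hab) x
  have hls : ∫⁻ x, ⨆ n : ℕ, eP (n : ℝ) γ x ∂F = ⨆ n : ℕ, ∫⁻ x, eP (n : ℝ) γ x ∂F :=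
    lintegral_iSup (fun n => measurable_eP _ _) hmono
  have hkey : ∀ᵐ x ∂F, ENNReal.ofReal (Real.exp (γ * x)) = ⨆ n : ℕ, eP (n : ℝ) γ x := by
    filter_upwards [ae_nonneg_of_neg_null F hF] with x hx
    obtain ⟨n₀, hn₀⟩ := exists_nat_ge x
    refine le_antisymm ?_ (iSup_le fun n => ?_)
    · refine le_iSup_of_le n₀ ?_
      unfold eP
      rw [Set.indicator_of_mem (Set.mem_Icc.mpr ⟨hx, hn₀⟩)]
    · unfold eP
      by_cases hm : x ∈ Set.Icc (0:ℝ) (n:ℝ)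
      · rw [Set.indicator_of_mem hm]
      · simp [Set.indicator_of_notMem hm]
  have : phi F γ ≤ M := by
    rw [phi, lintegral_congr_ae hkey, hls]
    exact hsup
  rw [hheavy γ hγ] at this
  exact absurd (lt_of_le_of_lt this hM) (lt_irrefl _)

lemma exists_pos_mass (F : MeasureTheory.Measure ℝ) [IsProbabilityMeasure F]
    (hF : F (Set.Iio 0) = 0) (hheavy : IsHeavyTailed F) :
    ∃ n : ℕ, 0 < F (Set.Ioc 1 (n : ℝ)) := by
  have h1 : 0 < F (Set.Ioi 1) := by
    by_contra hc
    push_neg at hc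
    have h0 : F (Set.Ioi 1) = 0 := le_antisymm hc (zero_le)
    have : phi F 1 ≤ ENNReal.ofReal (Real.exp 1) := by
      rw [phi]
      have hae : ∀ᵐ x ∂F, ENNReal.ofReal (Real.exp (1 * x)) ≤ ENNReal.ofReal (Real.exp 1) := by
        have hni : ∀ᵐ x ∂F, x ∉ Set.Ioi (1:ℝ) := by
          rw [MeasureTheory.ae_iff]; simp only [not_not, Set.setOf_mem_eq]; exact h0
        filter_upwards [hni] with x hx
        simp only [Set.mem_Ioi, not_lt] at hx
        exact ENNReal.ofReal_le_ofReal (Real.exp_le_exp.2 (by linarith))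
      calc ∫⁻ x, ENNReal.ofReal (Real.exp (1 * x)) ∂F
          ≤ ∫⁻ _, ENNReal.ofReal (Real.exp 1) ∂F := lintegral_mono_ae hae
        _ = ENNReal.ofReal (Real.exp 1) := by rw [lintegral_const, measure_univ, mul_one]
    rw [hheavy 1 one_pos] at this
    exact absurd this (by simp)
  by_contra hc
  push_neg at hc
  have hz : ∀ n : ℕ, F (Set.Ioc 1 (n : ℝ)) = 0 :=
    fun n => le_antisymm (hc n) (zero_le)
  have hun : Set.Ioi (1:ℝ) = ⋃ n : ℕ, Set.Ioc 1 (n : ℝ) := by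
    ext x
    simp only [Set.mem_Ioi, Set.mem_iUnion, Set.mem_Ioc]
    constructor
    · intro hx
      obtain ⟨n, hn⟩ := exists_nat_ge x
      exact ⟨n, hx, hn⟩
    · rintro ⟨n, hn, _⟩; exact hn
  rw [hun] at h1
  have : F (⋃ n : ℕ, Set.Ioc 1 (n : ℝ)) = 0 := by
    refine measure_iUnion_null fun n => hz n
  rw [this] at h1
  exact absurd h1 (lt_irrefl _)

lemma theta_le (F : MeasureTheory.Measure ℝ) [IsProbabilityMeasure F] {t γ : ℝ} (hγ : 0 ≤ γ) :
    ∫⁻ x, eP t γ x ∂F ≤ ENNReal.ofReal (Real.exp (γ * t)) := by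
  have hpt : ∀ x, eP t γ x ≤ (Set.Icc 0 t).indicator
      (fun _ => ENNReal.ofReal (Real.exp (γ * t))) x := by
    intro x
    unfold eP
    by_cases hx : x ∈ Set.Icc 0 t
    · simp only [Set.indicator_of_mem hx]
      exact ENNReal.ofReal_le_ofReal (Real.exp_le_exp.2 (mul_le_mul_of_nonneg_left hx.2 hγ))
    · simp [Set.indicator_of_notMem hx]
  calc ∫⁻ x, eP t γ x ∂F ≤ ∫⁻ x, (Set.Icc 0 t).indicator
        (fun _ => ENNReal.ofReal (Real.exp (γ * t))) x ∂F := lintegral_mono hpt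
    _ = ENNReal.ofReal (Real.exp (γ * t)) * F (Set.Icc 0 t) := by
        rw [lintegral_indicator measurableSet_Icc, MeasureTheory.setLIntegral_const]
    _ ≤ ENNReal.ofReal (Real.exp (γ * t)) * 1 := by
        exact mul_le_mul_right prob_le_one _
    _ = ENNReal.ofReal (Real.exp (γ * t)) := mul_one _

lemma exists_gamma (F : MeasureTheory.Measure ℝ) [IsProbabilityMeasure F]
    {t κ' γ₀ δ₂ : ℝ} (ht : 0 < t) (hκ' : 0 < κ') (hγ₀ : 0 < γ₀) (hδ₂ : 0 < δ₂)
    (hbig : ENNReal.ofReal (Real.exp κ') < ∫⁻ x, eP t γ₀ x ∂F) :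
    ∃ γ' : ℝ, 0 < γ' ∧ γ' ≤ γ₀ ∧
      (∫⁻ x, eP t γ' x ∂F) ≤ ENNReal.ofReal (Real.exp κ') ∧
      ENNReal.ofReal (Real.exp (κ' - 2 * δ₂)) ≤ ∫⁻ x, eP t γ' x ∂F := by
  set th : ℝ → ℝ≥0∞ := fun γ => ∫⁻ x, eP t γ x ∂F with hth
  have hmono : Monotone th := fun γ₁ γ₂ h => lintegral_mono (eP_mono_gamma t h)
  set S : Set ℝ := {γ : ℝ | 0 ≤ γ ∧ th γ ≤ ENNReal.ofReal (Real.exp κ')} with hS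
  have hmem : κ' / t ∈ S := by
    constructor
    · positivity
    · refine (theta_le F (by positivity)).trans ?_
      rw [div_mul_cancel₀ _ (ne_of_gt ht)]
  have hne : S.Nonempty := ⟨_, hmem⟩
  have hub : γ₀ ∈ upperBounds S := by
    intro γ hγ
    by_contra hc
    push_neg at hc
    exact absurd ((hmono hc.le).trans hγ.2) (not_le.2 hbig)
  have hbdd : BddAbove S := ⟨γ₀, hub⟩
  set γs := sSup S with hγs
  have hγs_pos : 0 < γs := lt_of_lt_of_le (by positivity) (le_csSup hbdd hmem)
  have hγs_le : γs ≤ γ₀ := csSup_le hne hub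
  set η := δ₂ / t with hη
  have hηpos : 0 < η := by positivity
  set γ' := max (γs - η) (γs / 2) with hγ'
  have hγ'pos : 0 < γ' := lt_of_lt_of_le (by linarith) (le_max_right _ _)
  have hγ'lt : γ' < γs := by
    apply max_lt <;> linarith
  refine ⟨γ', hγ'pos, le_trans hγ'lt.le hγs_le, ?_, ?_⟩
  · obtain ⟨γ'', hγ''S, hlt⟩ := exists_lt_of_lt_csSup hne hγ'lt
    exact (hmono hlt.le).trans hγ''S.2
  · have hnot : γs + η ∉ S := fun h => absurd (le_csSup hbdd h) (by linarith)
    have hgt : ENNReal.ofReal (Real.exp κ') < th (γs + η) := by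
      rw [hS] at hnot
      simp only [Set.mem_setOf_eq, not_and, not_le] at hnot
      exact hnot (by linarith)
    have hgap : γs + η - γ' ≤ 2 * η := by
      rcases max_cases (γs - η) (γs / 2) with ⟨he, hc⟩ | ⟨he, hc⟩ <;> rw [hγ', he] <;> linarith
    have hshift : th (γs + η) ≤
        ENNReal.ofReal (Real.exp (2 * δ₂)) * th γ' := by
      calc th (γs + η) ≤ ∫⁻ x, ENNReal.ofReal (Real.exp ((γs + η - γ') * t)) * eP t γ' x ∂F :=
            lintegral_mono (eP_shift t (by linarith) )
        _ = ENNReal.ofReal (Real.exp ((γs + η - γ') * t)) * th γ' := by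
            rw [lintegral_const_mul _ (measurable_eP _ _)]
        _ ≤ ENNReal.ofReal (Real.exp (2 * δ₂)) * th γ' := by
            refine mul_le_mul_left (ENNReal.ofReal_le_ofReal (Real.exp_le_exp.2 ?_)) _
            calc (γs + η - γ') * t ≤ (2 * η) * t := by
                  exact mul_le_mul_of_nonneg_right hgap ht.le
              _ = 2 * δ₂ := by rw [hη]; field_simp
    have hfin : ENNReal.ofReal (Real.exp (2 * δ₂)) *
        ENNReal.ofReal (Real.exp (κ' - 2 * δ₂)) ≤
        ENNReal.ofReal (Real.exp (2 * δ₂)) * th γ' := by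
      rw [← ENNReal.ofReal_mul (Real.exp_pos _).le, ← Real.exp_add]
      have : 2 * δ₂ + (κ' - 2 * δ₂) = κ' := by ring
      rw [this]
      exact le_trans hgt.le hshift
    exact by
      refine (ENNReal.mul_le_mul_iff_right ?_ ENNReal.ofReal_ne_top).1 hfin
      simpa using (Real.exp_pos (2 * δ₂))

lemma real_geom_bound {κ κ' : ℝ} (hκ : 0 < κ) (hκ' : 0 < κ') (hhalf : κ' ≤ κ / 2) (n : ℕ) :
    ∑ j ∈ Finset.range n, Real.exp (κ' * j) ≤ n + (16 * κ' / κ ^ 2) * Real.exp (κ * n) := by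
  have hn0 : (0:ℝ) ≤ n := Nat.cast_nonneg n
  have hsum : ∑ j ∈ Finset.range n, Real.exp (κ' * j) ≤ n * Real.exp (κ' * n) := by
    have := Finset.sum_le_card_nsmul (Finset.range n) (fun j => Real.exp (κ' * j))
      (Real.exp (κ' * n)) (fun j hj => by
        refine Real.exp_le_exp.2 (mul_le_mul_of_nonneg_left ?_ hκ'.le)
        exact_mod_cast (Finset.mem_range.1 hj).le)
    simpa [Finset.card_range, nsmul_eq_mul] using this
  have h2 : Real.exp (κ' * n) - 1 ≤ (κ' * n) * Real.exp (κ' * n) := by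
    have ha := Real.add_one_le_exp (-(κ' * n))
    rw [Real.exp_neg] at ha
    have hp := Real.exp_pos (κ' * n)
    have : (1 - κ' * n) * Real.exp (κ' * n) ≤ 1 := by
      rw [sub_mul, one_mul]
      have := mul_le_mul_of_nonneg_right ha hp.le
      rw [inv_mul_cancel₀ hp.ne'] at this
      nlinarith
    nlinarith
  have h3 : Real.exp (κ' * n) ≤ Real.exp ((κ / 2) * n) :=
    Real.exp_le_exp.2 (mul_le_mul_of_nonneg_right hhalf hn0)
  have h4 : (n:ℝ) ≤ (4 / κ) * Real.exp ((κ / 4) * n) := by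
    have hh := Real.add_one_le_exp ((κ / 4) * n)
    have h1 : (κ / 4) * n ≤ Real.exp ((κ / 4) * n) := by linarith
    calc (n:ℝ) = (4 / κ) * ((κ / 4) * n) := by
          field_simp
      _ ≤ (4 / κ) * Real.exp ((κ / 4) * n) :=
          mul_le_mul_of_nonneg_left h1 (by positivity)
  have h5 : (n:ℝ)^2 ≤ (16 / κ^2) * Real.exp ((κ / 2) * n) := by
    have hsq := mul_le_mul h4 h4 hn0 (by positivity)
    calc (n:ℝ)^2 = (n:ℝ) * n := sq (n:ℝ) ▸ by ring
      _ ≤ ((4 / κ) * Real.exp ((κ / 4) * n)) * ((4 / κ) * Real.exp ((κ / 4) * n)) := hsq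
      _ = (16 / κ^2) * (Real.exp ((κ / 4) * n) * Real.exp ((κ / 4) * n)) := by ring
      _ = (16 / κ^2) * Real.exp ((κ / 2) * n) := by
          rw [← Real.exp_add]
          ring_nf
  have h6 : (n:ℝ) * (Real.exp (κ' * n) - 1) ≤ (16 * κ' / κ^2) * Real.exp (κ * n) := by
    have hb : (n:ℝ) * (Real.exp (κ' * n) - 1) ≤ κ' * ((n:ℝ)^2 * Real.exp ((κ/2) * n)) := by
      have := mul_le_mul_of_nonneg_left h2 hn0
      have h' : (n:ℝ) * ((κ' * n) * Real.exp (κ' * n)) ≤ κ' * ((n:ℝ)^2 * Real.exp ((κ/2) * n)) := by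
        have := mul_le_mul_of_nonneg_left h3 (by positivity : (0:ℝ) ≤ κ' * n * n)
        nlinarith
      linarith
    have hc : κ' * ((n:ℝ)^2 * Real.exp ((κ/2) * n)) ≤
        κ' * ((16 / κ^2) * Real.exp ((κ/2) * n) * Real.exp ((κ/2) * n)) := by
      have := mul_le_mul_of_nonneg_right h5 (Real.exp_pos ((κ/2)*n)).le
      have := mul_le_mul_of_nonneg_left this hκ'.le
      linarith [this]
    have hexp : Real.exp ((κ/2) * n) * Real.exp ((κ/2) * n) = Real.exp (κ * n) := by
      rw [← Real.exp_add]; ring_nf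
    have hd : κ' * ((16 / κ^2) * Real.exp ((κ/2) * n) * Real.exp ((κ/2) * n)) =
        (16 * κ' / κ^2) * Real.exp (κ * n) := by
      rw [mul_assoc (16 / κ^2 : ℝ), hexp]; ring
    linarith
  have : (n:ℝ) * Real.exp (κ' * n) = n + (n:ℝ) * (Real.exp (κ' * n) - 1) := by ring
  linarith [hsum]

lemma geom_bound_ennreal {κ κ' : ℝ} (hκ : 0 < κ) (hκ' : 0 < κ') (hhalf : κ' ≤ κ / 2) (n : ℕ) :
    ∑ j ∈ Finset.range n, (ENNReal.ofReal (Real.exp κ')) ^ j ≤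
      (n : ℝ≥0∞) + ENNReal.ofReal (16 * κ' / κ ^ 2) * ENNReal.ofReal (Real.exp (κ * n)) := by
  have h1 : ∑ j ∈ Finset.range n, (ENNReal.ofReal (Real.exp κ')) ^ j
      = ENNReal.ofReal (∑ j ∈ Finset.range n, Real.exp (κ' * j)) := by
    rw [ENNReal.ofReal_sum_of_nonneg (fun j _ => (Real.exp_pos _).le)]
    refine Finset.sum_congr rfl fun j _ => ?_
    rw [← ENNReal.ofReal_pow (Real.exp_pos _).le, ← Real.exp_nat_mul, mul_comm (j:ℝ) κ']
  rw [h1]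
  calc ENNReal.ofReal (∑ j ∈ Finset.range n, Real.exp (κ' * j))
      ≤ ENNReal.ofReal ((n:ℝ) + (16 * κ' / κ ^ 2) * Real.exp (κ * n)) :=
        ENNReal.ofReal_le_ofReal (real_geom_bound hκ hκ' hhalf n)
    _ = ENNReal.ofReal (n:ℝ) + ENNReal.ofReal ((16 * κ' / κ ^ 2) * Real.exp (κ * n)) := by
        rw [ENNReal.ofReal_add (Nat.cast_nonneg n) (by positivity)]
    _ = (n : ℝ≥0∞) + ENNReal.ofReal (16 * κ' / κ ^ 2) * ENNReal.ofReal (Real.exp (κ * n)) := by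
        rw [ENNReal.ofReal_natCast, ENNReal.ofReal_mul (by positivity)]

lemma K_bound (p : ℕ → ℝ≥0∞) {κ κ' : ℝ} (hκ : 0 < κ) (hκ' : 0 < κ') (hhalf : κ' ≤ κ / 2) :
    ∑' n : ℕ, p n * ∑ j ∈ Finset.range n, (ENNReal.ofReal (Real.exp κ')) ^ j ≤
      (∑' n : ℕ, (n : ℝ≥0∞) * p n) +
        ENNReal.ofReal (16 * κ' / κ ^ 2) * ∑' n : ℕ, ENNReal.ofReal (Real.exp (κ * n)) * p n := by
  calc ∑' n : ℕ, p n * ∑ j ∈ Finset.range n, (ENNReal.ofReal (Real.exp κ')) ^ j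
      ≤ ∑' n : ℕ, ((n : ℝ≥0∞) * p n +
          ENNReal.ofReal (16 * κ' / κ ^ 2) * (ENNReal.ofReal (Real.exp (κ * n)) * p n)) := by
        refine ENNReal.tsum_le_tsum fun n => ?_
        calc p n * ∑ j ∈ Finset.range n, (ENNReal.ofReal (Real.exp κ')) ^ j
            ≤ p n * ((n : ℝ≥0∞) + ENNReal.ofReal (16 * κ' / κ ^ 2) *
                ENNReal.ofReal (Real.exp (κ * n))) :=
              mul_le_mul_right (geom_bound_ennreal hκ hκ' hhalf n) _
          _ = (n : ℝ≥0∞) * p n + ENNReal.ofReal (16 * κ' / κ ^ 2) *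
                (ENNReal.ofReal (Real.exp (κ * n)) * p n) := by ring
    _ = (∑' n : ℕ, (n : ℝ≥0∞) * p n) +
        ENNReal.ofReal (16 * κ' / κ ^ 2) * ∑' n : ℕ, ENNReal.ofReal (Real.exp (κ * n)) * p n := by
        rw [ENNReal.tsum_add, ENNReal.tsum_mul_left]


/-- Lemma 2: for heavy-tailed F with density f w.r.t. σ-finite μ and
a light-tailed independent stopping time τ, liminf f^{*τ}(x)/f(x) ≤ Eτ. -/
theorem stmt5 (μ : MeasureTheory.Measure ℝ) [MeasureTheory.SigmaFinite μ]
    (f : ℝ → ℝ≥0∞) (hf : Measurable f)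
    [MeasureTheory.IsProbabilityMeasure (μ.withDensity f)]
    (hsupp : (μ.withDensity f) (Set.Iio 0) = 0)
    (hheavy : IsHeavyTailed (μ.withDensity f))
    (p : ℕ → ℝ≥0∞) (hp0 : p 0 = 0) (hpsum : ∑' n, p n = 1)
    (hlight : ∃ κ : ℝ, 0 < κ ∧ ∑' n : ℕ, ENNReal.ofReal (Real.exp (κ * (n : ℝ))) * p n < ⊤)
    (ftau : ℝ → ℝ≥0∞) (hftau : Measurable ftau)
    (hdens : MeasureTheory.Measure.sum (fun n => p n • convPow (μ.withDensity f) n)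
      = μ.withDensity ftau) :
    liminf (fun x : ℝ => ftau x / f x) (atTop ⊓ MeasureTheory.ae μ) ≤
      ∑' n : ℕ, (n : ℝ≥0∞) * p n := by
  classical
  set F := μ.withDensity f with hFdef
  set m := ∑' n : ℕ, (n : ℝ≥0∞) * p n with hm
  by_contra hcon
  push_neg at hcon
  obtain ⟨κ, hκpos, hκsum⟩ := hlight
  have hm1 : (1 : ℝ≥0∞) ≤ m := by
    rw [hm, ← hpsum]
    refine ENNReal.tsum_le_tsum fun n => ?_
    match n with
    | 0 => simp [hp0]
    | Nat.succ k =>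
      have h1 : (1 : ℝ≥0∞) ≤ ((k + 1 : ℕ) : ℝ≥0∞) := by
        exact_mod_cast Nat.one_le_iff_ne_zero.2 (Nat.succ_ne_zero k)
      calc p (k + 1) = 1 * p (k + 1) := (one_mul _).symm
        _ ≤ ((k + 1 : ℕ) : ℝ≥0∞) * p (k + 1) := mul_le_mul_left h1 _
  obtain ⟨c, hmc, hcL⟩ := exists_between hcon
  have hc_top : c ≠ ⊤ := hcL.ne_top
  have hc0 : c ≠ 0 := (lt_of_lt_of_le zero_lt_one (hm1.trans hmc.le)).ne'
  have hev : ∀ᶠ x in atTop ⊓ MeasureTheory.ae μ, c < ftau x / f x :=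
    eventually_lt_of_lt_liminf hcL
  rw [Filter.eventually_inf] at hev
  obtain ⟨s, hs, v, hv, hsv⟩ := hev
  obtain ⟨x₀, hx₀⟩ := Filter.mem_atTop_sets.1 hs
  set x₁ := max x₀ 1 with hx₁def
  have hx₁1 : (1 : ℝ) ≤ x₁ := le_max_right _ _
  have hx₁0 : (0 : ℝ) ≤ x₁ := by linarith
  have hae : ∀ᵐ x ∂μ, x₁ ≤ x → c * f x ≤ ftau x := by
    have hvae : ∀ᵐ x ∂μ, x ∈ v := by rwa [Filter.eventually_iff, Set.setOf_mem_eq]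
    filter_upwards [hvae] with x hxv hx₁x
    have hmem : x ∈ s := hx₀ x (le_trans (le_max_left x₀ 1) hx₁x)
    exact (ENNReal.mul_lt_of_lt_div (hsv x ⟨hmem, hxv⟩)).le
  set T := ∑' n : ℕ, ENNReal.ofReal (Real.exp (κ * (n : ℝ))) * p n with hT
  have hTtop : T ≠ ⊤ := hκsum.ne
  have hchoice : ∃ κ' : ℝ, 0 < κ' ∧ κ' ≤ κ / 2 ∧
      m + ENNReal.ofReal (16 * κ' / κ ^ 2) * T < c := by
    by_cases hT0 : T = 0
    · exact ⟨κ / 2, by positivity, le_refl _, by simpa [hT0] using hmc⟩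
    · obtain ⟨c', hmc', hc'c⟩ := exists_between hmc
      have hc'top : c' ≠ ⊤ := hc'c.ne_top
      set u := (c' - m) / T with hu
      have hcm0 : c' - m ≠ 0 := by
        rw [Ne, tsub_eq_zero_iff_le]
        exact not_le.2 hmc'
      have hu0 : u ≠ 0 := by
        rw [hu, Ne, ENNReal.div_eq_zero_iff]
        push_neg
        exact ⟨hcm0, hTtop⟩
      have hcmtop : c' - m ≠ ⊤ :=
        fun h => hc'top (top_le_iff.1 (h ▸ (tsub_le_self : c' - m ≤ c')))
      have hutop : u ≠ ⊤ := by
        rw [hu]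
        intro h
        rcases ENNReal.div_eq_top.1 h with ⟨_, h2⟩ | ⟨h1, _⟩
        · exact hT0 h2
        · exact hcmtop h1
      have hut0 : 0 < u.toReal := ENNReal.toReal_pos hu0 hutop
      set ρ := min (κ / 2) (κ ^ 2 * u.toReal / 16) with hρ
      refine ⟨ρ, by positivity, min_le_left _ _, ?_⟩
      have h16 : ENNReal.ofReal (16 * ρ / κ ^ 2) ≤ u := by
        have hle : 16 * ρ / κ ^ 2 ≤ u.toReal := by
          have hρle : ρ ≤ κ ^ 2 * u.toReal / 16 := min_le_right _ _
          rw [div_le_iff₀ (by positivity : (0:ℝ) < κ ^ 2)]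
          nlinarith
        calc ENNReal.ofReal (16 * ρ / κ ^ 2) ≤ ENNReal.ofReal u.toReal :=
              ENNReal.ofReal_le_ofReal hle
          _ = u := ENNReal.ofReal_toReal hutop
      calc m + ENNReal.ofReal (16 * ρ / κ ^ 2) * T ≤ m + u * T :=
            add_le_add_right (mul_le_mul_left h16 T) m
        _ = m + (c' - m) := by rw [hu, ENNReal.div_mul_cancel hT0 hTtop]
        _ = c' := add_tsub_cancel_of_le hmc'.le
        _ < c := hc'c
  obtain ⟨κ', hκ'0, hκ'half, hKtarget⟩ := hchoice
  set eκ := ENNReal.ofReal (Real.exp κ') with heκ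
  set K := ∑' n : ℕ, p n * ∑ j ∈ Finset.range n, eκ ^ j with hK
  have hKc : K < c := lt_of_le_of_lt (K_bound p hκpos hκ'0 hκ'half) hKtarget
  have hexpκ'1 : 1 < Real.exp κ' := Real.one_lt_exp_iff.2 hκ'0
  have hcK : c ≤ K := by
    refine ENNReal.le_of_forall_pos_le_add fun ε hε _ => ?_
    set η := min (ε : ℝ≥0∞) 1 with hη
    have hη0 : η ≠ 0 := by
      refine (lt_min ?_ zero_lt_one).ne'
      exact_mod_cast hε
    have hη1 : η ≤ 1 := min_le_right _ _
    have hηtop : η ≠ ⊤ := (lt_of_le_of_lt hη1 ENNReal.one_lt_top).ne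
    set β := ENNReal.ofReal ((Real.exp κ' - 1) / 2) with hβ
    have hβ0 : β ≠ 0 := by
      rw [hβ, Ne, ENNReal.ofReal_eq_zero, not_le]
      linarith
    have hβtop : β ≠ ⊤ := ENNReal.ofReal_ne_top
    set u2 := η * β / c with hu2
    have hu2_0 : u2 ≠ 0 := by
      rw [hu2, Ne, ENNReal.div_eq_zero_iff]
      push_neg
      exact ⟨mul_ne_zero hη0 hβ0, hc_top⟩
    have hu2top : u2 ≠ ⊤ := by
      rw [hu2, Ne, ENNReal.div_eq_top]
      push_neg
      exact ⟨fun _ => hc0, fun h => absurd h (ENNReal.mul_ne_top hηtop hβtop)⟩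
    set u' := u2.toReal with hu'
    have hu'0 : 0 < u' := ENNReal.toReal_pos hu2_0 hu2top
    set γ₀ := Real.log (1 + min u' 1) / x₁ with hγ₀def
    have hmin0 : 0 < min u' 1 := lt_min hu'0 zero_lt_one
    have hγ₀ : 0 < γ₀ := div_pos (Real.log_pos (by linarith)) (by linarith)
    obtain ⟨nt, hnt⟩ := exists_trunc_large F hsupp hheavy γ₀ hγ₀ eκ ENNReal.ofReal_lt_top
    set t := max (nt : ℝ) x₁ with htdef
    have htx₁ : x₁ ≤ t := le_max_right _ _
    have ht1 : (0 : ℝ) < t := lt_of_lt_of_le (by linarith) htx₁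
    have hbig : eκ < ∫⁻ x, eP t γ₀ x ∂F :=
      lt_of_lt_of_le hnt (lintegral_mono (eP_mono_t γ₀ (le_max_left _ _)))
    set δ₂ := (κ' - Real.log ((1 + Real.exp κ') / 2)) / 2 with hδ₂def
    have hδ₂pos : 0 < δ₂ := by
      have h1 : Real.log ((1 + Real.exp κ') / 2) < Real.log (Real.exp κ') := by
        refine Real.log_lt_log (by positivity) ?_
        linarith
      rw [Real.log_exp] at h1
      rw [hδ₂def]
      linarith
    have hκδ : κ' - 2 * δ₂ = Real.log ((1 + Real.exp κ') / 2) := by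
      rw [hδ₂def]; ring
    obtain ⟨γ', hγ'0, hγ'le, hθup, hθlo⟩ := exists_gamma F ht1 hκ'0 hγ₀ hδ₂pos hbig
    set θ' := ∫⁻ x, eP t γ' x ∂F with hθ'
    set ψ := ∫⁻ x, eQ t γ' x ∂F with hψ
    have hθlo' : β + 1 ≤ θ' := by
      have heq : ENNReal.ofReal (Real.exp (κ' - 2 * δ₂)) = β + 1 := by
        rw [hκδ, Real.exp_log (by positivity), hβ, ← ENNReal.ofReal_one,
          ← ENNReal.ofReal_add (by linarith) zero_le_one]
        congr 1
        ring
      rw [← heq]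
      exact hθlo
    have hψβ : β ≤ ψ := by
      have hθψ : θ' ≤ ψ + 1 := by
        calc θ' ≤ ∫⁻ x, (eQ t γ' x + (Set.Icc 0 t).indicator (fun _ => (1 : ℝ≥0∞)) x) ∂F :=
              lintegral_mono (eP_le_eQ_add_one t γ')
          _ = ψ + 1 * F (Set.Icc 0 t) := by
              rw [lintegral_add_left (measurable_eQ _ _),
                lintegral_indicator measurableSet_Icc, MeasureTheory.setLIntegral_const]
          _ ≤ ψ + 1 * 1 := add_le_add_right (mul_le_mul_right prob_le_one 1) ψ
          _ = ψ + 1 := by rw [mul_one]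
      exact (ENNReal.add_le_add_iff_right ENNReal.one_ne_top).1 (le_trans hθlo' hθψ)
    have hψtop : ψ ≠ ⊤ :=
      (lt_of_le_of_lt (le_trans (lintegral_mono (eQ_le_eP t γ')) hθup)
        ENNReal.ofReal_lt_top).ne
    have hψ0 : ψ ≠ 0 := by
      intro h
      rw [h, le_zero_iff] at hψβ
      exact hβ0 hψβ
    set ε₀ := ENNReal.ofReal (Real.exp (γ' * x₁) - 1) with hε₀def
    have hε₀u : ε₀ ≤ u2 := by
      have h1 : Real.exp (γ' * x₁) ≤ 1 + min u' 1 := by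
        have h2 : γ' * x₁ ≤ γ₀ * x₁ := mul_le_mul_of_nonneg_right hγ'le hx₁0
        have h3 : γ₀ * x₁ = Real.log (1 + min u' 1) := by
          rw [hγ₀def, div_mul_cancel₀ _ (by linarith : x₁ ≠ 0)]
        calc Real.exp (γ' * x₁) ≤ Real.exp (γ₀ * x₁) := Real.exp_le_exp.2 h2
          _ = 1 + min u' 1 := by rw [h3, Real.exp_log (by linarith)]
      calc ε₀ ≤ ENNReal.ofReal (min u' 1) := ENNReal.ofReal_le_ofReal (by linarith)
        _ ≤ ENNReal.ofReal u' := ENNReal.ofReal_le_ofReal (min_le_left _ _)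
        _ = u2 := ENNReal.ofReal_toReal hu2top
    have hcε₀ : c * ε₀ ≤ η * β := by
      calc c * ε₀ ≤ c * (η * β / c) := mul_le_mul_right hε₀u c
        _ = η * β := ENNReal.mul_div_cancel hc0 hc_top
    set R := (Set.Icc x₁ t).indicator (fun x => ENNReal.ofReal (Real.exp (γ' * x) - 1))
      with hRdef
    have hRmeas : Measurable R :=
      ((measurable_const.mul measurable_id').exp.sub
        measurable_const).ennreal_ofReal.indicator measurableSet_Icc
    have hsplit : ψ ≤ (∫⁻ x, R x ∂F) + ε₀ := by
      have hpt : ∀ x, eQ t γ' x ≤ R x + (Set.Ico 0 x₁).indicator (fun _ => ε₀) x := by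
        intro x
        unfold eQ
        by_cases hx : x ∈ Set.Icc 0 t
        · rw [Set.indicator_of_mem hx]
          by_cases hx1 : x₁ ≤ x
          · have : x ∈ Set.Icc x₁ t := ⟨hx1, hx.2⟩
            rw [hRdef]
            rw [Set.indicator_of_mem this]
            exact le_add_right (le_refl _)
          · push_neg at hx1
            have : x ∈ Set.Ico 0 x₁ := ⟨hx.1, hx1⟩
            rw [Set.indicator_of_mem this]
            refine le_add_left ?_
            rw [hε₀def]
            refine ENNReal.ofReal_le_ofReal ?_
            have : Real.exp (γ' * x) ≤ Real.exp (γ' * x₁) :=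
              Real.exp_le_exp.2 (mul_le_mul_of_nonneg_left hx1.le hγ'0.le)
            linarith
        · rw [Set.indicator_of_notMem hx]
          exact zero_le
      calc ψ ≤ ∫⁻ x, (R x + (Set.Ico 0 x₁).indicator (fun _ => ε₀) x) ∂F :=
            lintegral_mono hpt
        _ = (∫⁻ x, R x ∂F) + ε₀ * F (Set.Ico 0 x₁) := by
            rw [lintegral_add_left hRmeas, lintegral_indicator measurableSet_Ico,
              MeasureTheory.setLIntegral_const]
        _ ≤ (∫⁻ x, R x ∂F) + ε₀ * 1 := add_le_add_right (mul_le_mul_right prob_le_one ε₀) _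
        _ = (∫⁻ x, R x ∂F) + ε₀ := by rw [mul_one]
    have hcmp : c * (∫⁻ x, R x ∂F) ≤ ∫⁻ x, R x ∂(μ.withDensity ftau) := by
      rw [hFdef, lintegral_withDensity_eq_lintegral_mul μ hf hRmeas,
        lintegral_withDensity_eq_lintegral_mul μ hftau hRmeas]
      simp only [Pi.mul_apply]
      rw [← lintegral_const_mul c (by exact hf.mul hRmeas : Measurable fun a => f a * R a)]
      refine lintegral_mono_ae ?_
      filter_upwards [hae] with x hx
      by_cases hRx : R x = 0
      · simp [hRx]
      · have hxmem : x ∈ Set.Icc x₁ t := by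
          by_contra hm
          exact hRx (Set.indicator_of_notMem hm _)
        calc c * (f x * R x) = (c * f x) * R x := by ring
          _ ≤ ftau x * R x := mul_le_mul_left (hx hxmem.1) _
    have hsumb : ∫⁻ x, R x ∂(μ.withDensity ftau) ≤ ψ * K := by
      rw [← hdens, lintegral_sum_measure]
      have hRQ : ∀ x, R x ≤ eQ t γ' x := by
        intro x
        rw [hRdef]
        exact Set.indicator_le_indicator_of_subset
          (Set.Icc_subset_Icc_left hx₁0) (fun _ => zero_le) x
      calc ∑' n, ∫⁻ x, R x ∂(p n • convPow F n)
          = ∑' n : ℕ, p n * ∫⁻ x, R x ∂(convPow F n) := by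
            refine tsum_congr fun n => ?_
            rw [lintegral_smul_measure, smul_eq_mul]
        _ ≤ ∑' n : ℕ, p n * (ψ * ∑ j ∈ Finset.range n, eκ ^ j) := by
            refine ENNReal.tsum_le_tsum fun n => mul_le_mul_right ?_ _
            haveI := ‹IsProbabilityMeasure F›
            calc ∫⁻ x, R x ∂(convPow F n) ≤ ∫⁻ x, eQ t γ' x ∂(convPow F n) :=
                  lintegral_mono hRQ
              _ ≤ ψ * ∑ j ∈ Finset.range n, θ' ^ j :=
                  lintegral_eQ_convPow F hsupp t γ' hγ'0.le n
              _ ≤ ψ * ∑ j ∈ Finset.range n, eκ ^ j := by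
                  refine mul_le_mul_right (Finset.sum_le_sum fun j _ => ?_) ψ
                  exact pow_le_pow_left' hθup j
        _ = ψ * K := by
            rw [hK, ← ENNReal.tsum_mul_left]
            refine tsum_congr fun n => ?_
            ring
    have hfinal : c * ψ ≤ (K + η) * ψ := by
      calc c * ψ ≤ c * ((∫⁻ x, R x ∂F) + ε₀) := mul_le_mul_right hsplit c
        _ = c * (∫⁻ x, R x ∂F) + c * ε₀ := mul_add _ _ _
        _ ≤ ψ * K + η * β := add_le_add (hcmp.trans hsumb) hcε₀
        _ ≤ ψ * K + η * ψ := add_le_add_right (mul_le_mul_right hψβ η) _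
        _ = (K + η) * ψ := by ring
    have hcKη : c ≤ K + η := (ENNReal.mul_le_mul_iff_left hψ0 hψtop).1 hfinal
    exact hcKη.trans (add_le_add_right (min_le_left _ _) K)
  exact absurd hKc (not_lt.2 hcK)
end
end

section
/- Let F be a distribution on [0,∞) and γ > 0. If for every fixed y > 0, liminf_{x→∞} F̄(x−y)/F̄(x) ≥ e^{γy}, then liminf_{x→∞} (F*F)‾(x)/F̄(x) ≥ 2φ(γ), where φ(γ) = ∫ e^{γy} F(dy) (possibly infinite). -/
open MeasureTheory Filter Real Set
open scoped ENNReal Topology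

noncomputable section

lemma tail_anti (F : Measure ℝ) : Antitone (tail F) :=
  fun _ _ h => measure_mono (Ioi_subset_Ioi h)

lemma tail_shift_mono (F : Measure ℝ) (x : ℝ) : Monotone (fun y => tail F (x - y)) :=
  fun a b h => tail_anti F (by linarith)

lemma fatou_atTop (μ : Measure ℝ) (f : ℝ → ℝ → ℝ≥0∞)
    (hmono : ∀ x, Monotone (f x)) :
    ∫⁻ y, liminf (fun x => f x y) atTop ∂μ ≤ liminf (fun x => ∫⁻ y, f x y ∂μ) atTop := by
  set h : ℕ → ℝ → ℝ≥0∞ := fun n y => ⨅ x ∈ Ici (n : ℝ), f x y with hh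
  have hmeas : ∀ n, Measurable (h n) := by
    intro n
    have hm : Monotone (h n) := fun a b hab =>
      le_iInf₂ fun x hx => (iInf₂_le x hx).trans (hmono x hab)
    exact hm.measurable
  have hmonoh : Monotone h := fun m n hmn y =>
    le_iInf₂ fun x hx => iInf₂_le x (le_trans (by exact_mod_cast Nat.cast_le.mpr hmn) hx)
  calc ∫⁻ y, liminf (fun x => f x y) atTop ∂μ
      ≤ ∫⁻ y, ⨆ n, h n y ∂μ := by
        refine lintegral_mono fun y => ?_
        rw [liminf_eq]
        refine sSup_le fun a ha => ?_
        obtain ⟨b, hb⟩ := eventually_atTop.mp ha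
        obtain ⟨n, hn⟩ := exists_nat_ge b
        exact le_trans (le_iInf₂ fun x hx => hb x (hn.trans hx)) (le_iSup (fun n => h n y) n)
    _ = ⨆ n, ∫⁻ y, h n y ∂μ := lintegral_iSup hmeas hmonoh
    _ ≤ liminf (fun x => ∫⁻ y, f x y ∂μ) atTop := by
        refine iSup_le fun n => ?_
        refine le_liminf_of_le (by isBoundedDefault) ?_
        filter_upwards [eventually_ge_atTop (n : ℝ)] with x hx
        exact lintegral_mono fun y => iInf₂_le x hx

lemma two_mul_le_liminf {f : Filter ℝ} {u : ℝ → ℝ≥0∞} {a : ℝ≥0∞} (h : a ≤ liminf u f) :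
    2 * a ≤ liminf (fun x => 2 * u x) f := by
  calc 2 * a ≤ 2 * liminf u f := mul_le_mul_right h 2
    _ = 2 * sSup {b | ∀ᶠ x in f, b ≤ u x} := by rw [liminf_eq]
    _ = ⨆ b ∈ {b | ∀ᶠ x in f, b ≤ u x}, 2 * b := ENNReal.mul_sSup
    _ ≤ liminf (fun x => 2 * u x) f := by
        refine iSup₂_le fun b hb => le_liminf_of_le (by isBoundedDefault) ?_
        filter_upwards [hb] with x hx using mul_le_mul_right hx 2

lemma core (F : Measure ℝ) [IsProbabilityMeasure F] (A x : ℝ) (hx : 2 * A ≤ x) :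
    ∫⁻ y in Iic A, 2 * tail F (x - y) ∂F ≤ tail (mconv F F) x := by
  have hmeasadd : Measurable fun p : ℝ × ℝ => p.1 + p.2 := by fun_prop
  set S1 : Set (ℝ × ℝ) := {p | x < p.1 + p.2 ∧ p.2 ≤ A} with hS1def
  set S2 : Set (ℝ × ℝ) := {p | x < p.1 + p.2 ∧ p.1 ≤ A} with hS2def
  have hS1 : MeasurableSet S1 :=
    (measurableSet_lt measurable_const hmeasadd).inter
      (measurableSet_le measurable_snd measurable_const)
  have hS2 : MeasurableSet S2 :=
    (measurableSet_lt measurable_const hmeasadd).inter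
      (measurableSet_le measurable_fst measurable_const)
  have hdisj : Disjoint S1 S2 := by
    rw [Set.disjoint_left]
    rintro ⟨u, v⟩ ⟨h1, h2⟩ ⟨_, h4⟩
    simp only at *
    linarith
  have e2 : (F.prod F) S2 = ∫⁻ y in Iic A, tail F (x - y) ∂F := by
    rw [Measure.prod_apply hS2, ← lintegral_indicator measurableSet_Iic]
    congr 1; ext u
    by_cases hu : u ≤ A
    · have hpre : Prod.mk u ⁻¹' S2 = Ioi (x - u) := by
        ext v
        simp only [hS2def, mem_preimage, mem_setOf_eq, mem_Ioi]
        constructor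
        · rintro ⟨h1, _⟩; linarith
        · intro h1; exact ⟨by linarith, hu⟩
      simp [indicator, hu, hpre, tail]
    · have hpre : Prod.mk u ⁻¹' S2 = ∅ := by
        ext v; simp only [hS2def, mem_preimage, mem_setOf_eq, mem_empty_iff_false, iff_false]
        rintro ⟨_, h⟩; exact hu h
      simp [indicator, hu, hpre]
  have e1 : (F.prod F) S1 = ∫⁻ y in Iic A, tail F (x - y) ∂F := by
    rw [Measure.prod_apply_symm hS1, ← lintegral_indicator measurableSet_Iic]
    congr 1; ext v
    by_cases hv : v ≤ A
    · have hpre : (fun u => (u, v)) ⁻¹' S1 = Ioi (x - v) := by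
        ext u
        simp only [hS1def, mem_preimage, mem_setOf_eq, mem_Ioi]
        constructor
        · rintro ⟨h1, _⟩; linarith
        · intro h1; exact ⟨by linarith, hv⟩
      simp [indicator, hv, hpre, tail]
    · have hpre : (fun u => (u, v)) ⁻¹' S1 = ∅ := by
        ext u; simp only [hS1def, mem_preimage, mem_setOf_eq, mem_empty_iff_false, iff_false]
        rintro ⟨_, h⟩; exact hv h
      simp [indicator, hv, hpre]
  have hmeastail : Measurable fun y => tail F (x - y) := (tail_shift_mono F x).measurable
  have hsum : ∫⁻ y in Iic A, 2 * tail F (x - y) ∂F = (F.prod F) S1 + (F.prod F) S2 := by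
    rw [e1, e2]
    simp_rw [two_mul]
    rw [lintegral_add_left hmeastail]
  rw [hsum, ← measure_union hdisj hS2]
  have hsub : S1 ∪ S2 ⊆ (fun p : ℝ × ℝ => p.1 + p.2) ⁻¹' Ioi x := by
    rintro p (⟨h1, _⟩ | ⟨h1, _⟩) <;> exact h1
  calc (F.prod F) (S1 ∪ S2) ≤ (F.prod F) ((fun p : ℝ × ℝ => p.1 + p.2) ⁻¹' Ioi x) :=
        measure_mono hsub
    _ = tail (mconv F F) x := by
        rw [tail, mconv, Measure.map_apply hmeasadd measurableSet_Ioi]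

/-- Lemma 7: lower bound liminf (F*F)‾(x)/F̄(x) ≥ 2φ(γ). -/
theorem stmt8 (F : MeasureTheory.Measure ℝ) [MeasureTheory.IsProbabilityMeasure F]
    (hsupp : F (Set.Iio 0) = 0) (hub : ∀ x : ℝ, tail F x ≠ 0)
    (γ : ℝ) (hγ : 0 < γ)
    (hins : ∀ y : ℝ, 0 < y →
      ENNReal.ofReal (Real.exp (γ * y)) ≤
        liminf (fun x : ℝ => tail F (x - y) / tail F x) atTop) :
    2 * phi F γ ≤ liminf (fun x : ℝ => tail (mconv F F) x / tail F x) atTop := by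
  have htop : ∀ x : ℝ, tail F x ≠ ⊤ := fun x => measure_ne_top F _
  have hexpmeas : Measurable fun y : ℝ => ENNReal.ofReal (Real.exp (γ * y)) := by fun_prop
  -- φ(γ) as a sup of truncated integrals
  have hphi : phi F γ = ⨆ n : ℕ, ∫⁻ y in Iic (n : ℝ), ENNReal.ofReal (Real.exp (γ * y)) ∂F := by
    rw [phi]
    have hpt : ∀ y : ℝ, ENNReal.ofReal (Real.exp (γ * y)) =
        ⨆ n : ℕ, (Iic (n : ℝ)).indicator (fun y => ENNReal.ofReal (Real.exp (γ * y))) y := by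
      intro y
      obtain ⟨n, hn⟩ := exists_nat_ge y
      apply le_antisymm
      · refine le_iSup_of_le n ?_
        rw [indicator_of_mem (mem_Iic.mpr hn)]
      · exact iSup_le fun n => indicator_le_self _ _ y
    calc ∫⁻ y, ENNReal.ofReal (Real.exp (γ * y)) ∂F
        = ∫⁻ y, ⨆ n : ℕ, (Iic (n : ℝ)).indicator
            (fun y => ENNReal.ofReal (Real.exp (γ * y))) y ∂F := by
          exact lintegral_congr hpt
      _ = ⨆ n : ℕ, ∫⁻ y, (Iic (n : ℝ)).indicator
            (fun y => ENNReal.ofReal (Real.exp (γ * y))) y ∂F := by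
          refine lintegral_iSup (fun n => hexpmeas.indicator measurableSet_Iic) ?_
          intro m n hmn y
          exact indicator_le_indicator_of_subset (Iic_subset_Iic.mpr (by exact_mod_cast hmn))
            (fun y => zero_le) y
      _ = ⨆ n : ℕ, ∫⁻ y in Iic (n : ℝ), ENNReal.ofReal (Real.exp (γ * y)) ∂F := by
          refine iSup_congr fun n => ?_
          rw [lintegral_indicator measurableSet_Iic]
  rw [hphi, ENNReal.mul_iSup]
  refine iSup_le fun n => ?_
  set A := (n : ℝ) with hA
  -- eventual pointwise inequality
  have key : ∀ᶠ x in atTop,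
      ∫⁻ y in Iic A, 2 * (tail F (x - y) / tail F x) ∂F ≤ tail (mconv F F) x / tail F x := by
    filter_upwards [eventually_ge_atTop (2 * A)] with x hx
    have hc := core F A x hx
    have heq : ∫⁻ y in Iic A, 2 * (tail F (x - y) / tail F x) ∂F
        = (∫⁻ y in Iic A, 2 * tail F (x - y) ∂F) / tail F x := by
      simp_rw [div_eq_mul_inv, ← mul_assoc]
      rw [lintegral_mul_const'' _ (((tail_shift_mono F x).measurable.const_mul 2).aemeasurable)]
    rw [heq]
    exact ENNReal.div_le_div_right hc _
  refine le_trans ?_ (liminf_le_liminf key)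
  have hmono : ∀ x : ℝ, Monotone fun y => 2 * (tail F (x - y) / tail F x) := by
    intro x a b hab
    exact mul_le_mul_right (ENNReal.div_le_div_right (tail_shift_mono F x hab) _) 2
  refine le_trans ?_ (fatou_atTop (F.restrict (Iic A)) _ hmono)
  rw [← lintegral_const_mul 2 hexpmeas]
  refine lintegral_mono_ae ?_
  have h0 : ∀ᵐ y ∂F.restrict (Iic A), 0 ≤ y := by
    rw [ae_iff]
    have : {y : ℝ | ¬0 ≤ y} = Iio 0 := by ext y; simp [not_le]
    rw [this]
    exact le_antisymm ((Measure.restrict_le_self _).trans_eq hsupp) zero_le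
  filter_upwards [h0] with y hy
  apply two_mul_le_liminf
  rcases eq_or_lt_of_le hy with h | h
  · have hconst : (fun x : ℝ => tail F (x - y) / tail F x) = fun _ => 1 := by
      ext x
      rw [← h, sub_zero]
      exact ENNReal.div_self (hub x) (htop x)
    rw [hconst, liminf_const, ← h]
    simp
  · exact hins y h
end
end

section
/- Let F be a distribution on [0,∞) and γ ≥ 0 with φ(γ) = ∫ e^{γu} F(du) < ∞. Let G be the exponentially tilted distribution G(du) = e^{γu} F(du)/φ(γ). Then liminf_{x→∞} (G*G)‾(x)/Ḡ(x) ≥ (1/φ(γ)) liminf_{x→∞} (F*F)‾(x)/F̄(x), and limsup_{x→∞} (G*G)‾(x)/Ḡ(x) ≤ (1/φ(γ)) limsup_{x→∞} (F*F)‾(x)/F̄(x). -/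
open MeasureTheory Filter Real Set
open scoped ENNReal Topology

noncomputable section

/-- Exponential tilting: G(du) = e^{γu} F(du)/φ(γ). -/
def tilt (F : MeasureTheory.Measure ℝ) (γ : ℝ) : MeasureTheory.Measure ℝ :=
  (phi F γ)⁻¹ • F.withDensity (fun u => ENNReal.ofReal (Real.exp (γ * u)))

section Stmt9Aux

private lemma aux_le_of_forall_lt {a b : ℝ≥0∞} (h : ∀ c, c < a → c ≤ b) : a ≤ b := by
  by_contra hh
  push_neg at hh
  obtain ⟨c, hbc, hca⟩ := exists_between hh
  exact absurd (h c hca) (not_le.2 hbc)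

private lemma aux_ge_of_forall_gt {a b : ℝ≥0∞} (h : ∀ c, a < c → b ≤ c) : b ≤ a := by
  by_contra hh
  push_neg at hh
  obtain ⟨c, hac, hcb⟩ := exists_between hh
  exact absurd (h c hac) (not_le.2 hcb)

private lemma w_meas (γ : ℝ) : Measurable fun u : ℝ => ENNReal.ofReal (Real.exp (γ * u)) :=
  ((measurable_const.mul measurable_id).exp).ennreal_ofReal

/-- The truncated exponential moment `S μ γ x = ∫_{(x,∞)} e^{γ u} μ(du)`. -/
private def Sfun (μ : MeasureTheory.Measure ℝ) (γ : ℝ) (x : ℝ) : ℝ≥0∞ :=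
  ∫⁻ u in Set.Ioi x, ENNReal.ofReal (Real.exp (γ * u)) ∂μ

private lemma Sfun_antitone (μ : MeasureTheory.Measure ℝ) (γ : ℝ) : Antitone (Sfun μ γ) :=
  fun _ _ hab => lintegral_mono_set (Set.Ioi_subset_Ioi hab)

private lemma Sfun_meas (μ : MeasureTheory.Measure ℝ) (γ : ℝ) : Measurable (Sfun μ γ) :=
  (Sfun_antitone μ γ).measurable

/-- Layer-cake representation of the truncated exponential moment. -/
private lemma Sfun_repr (μ : MeasureTheory.Measure ℝ) {γ : ℝ} (hγ : 0 < γ) (x : ℝ) :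
    Sfun μ γ x = ∫⁻ t in Set.Ioi (0:ℝ), μ (Set.Ioi (max (Real.log t / γ) x)) := by
  unfold Sfun
  rw [lintegral_eq_lintegral_meas_lt (f := fun u => Real.exp (γ * u)) (μ.restrict (Set.Ioi x))
      (Filter.Eventually.of_forall fun u => (Real.exp_pos _).le)
      (((measurable_const.mul measurable_id).exp :
        Measurable fun u : ℝ => Real.exp (γ * u)).aemeasurable)]
  refine setLIntegral_congr_fun measurableSet_Ioi ?_
  intro t ht
  have hset : {a : ℝ | t < Real.exp (γ * a)} = Set.Ioi (Real.log t / γ) := by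
    ext a
    simp only [Set.mem_setOf_eq, Set.mem_Ioi]
    rw [div_lt_iff₀ hγ, ← Real.log_lt_iff_lt_exp ht, mul_comm]
  beta_reduce
  rw [hset, Measure.restrict_apply measurableSet_Ioi, Set.Ioi_inter_Ioi]

/-- The tail of the tilted measure. -/
private lemma tilt_tail (F : MeasureTheory.Measure ℝ) (γ : ℝ) (x : ℝ) :
    tail (tilt F γ) x = (phi F γ)⁻¹ * Sfun F γ x := by
  unfold tail tilt
  rw [Measure.smul_apply, withDensity_apply _ measurableSet_Ioi, smul_eq_mul]
  rfl

/-- The truncated exponential moment of the convolution as a double integral. -/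
private lemma Sfun_mconv (F : MeasureTheory.Measure ℝ) [SFinite F] (γ : ℝ) (x : ℝ) :
    Sfun (mconv F F) γ x
      = ∫⁻ u, ENNReal.ofReal (Real.exp (γ * u)) * Sfun F γ (x - u) ∂F := by
  have hmap : Measurable fun p : ℝ × ℝ => p.1 + p.2 := measurable_fst.add measurable_snd
  have h1 : Sfun (mconv F F) γ x
      = ∫⁻ p in (fun p : ℝ × ℝ => p.1 + p.2) ⁻¹' Set.Ioi x,
          ENNReal.ofReal (Real.exp (γ * (p.1 + p.2))) ∂(F.prod F) :=
    setLIntegral_map measurableSet_Ioi (w_meas γ) hmap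
  have hfm : Measurable (((fun p : ℝ × ℝ => p.1 + p.2) ⁻¹' Set.Ioi x).indicator
      fun p : ℝ × ℝ => ENNReal.ofReal (Real.exp (γ * (p.1 + p.2)))) :=
    Measurable.indicator (((w_meas γ).comp hmap) :
      Measurable fun p : ℝ × ℝ => ENNReal.ofReal (Real.exp (γ * (p.1 + p.2))))
      (hmap measurableSet_Ioi)
  rw [h1, ← lintegral_indicator (hmap measurableSet_Ioi), lintegral_prod _ hfm.aemeasurable]
  refine lintegral_congr fun u => ?_
  have h2 : ∀ v : ℝ,
      ((fun p : ℝ × ℝ => p.1 + p.2) ⁻¹' Set.Ioi x).indicator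
        (fun p : ℝ × ℝ => ENNReal.ofReal (Real.exp (γ * (p.1 + p.2)))) (u, v)
      = (Set.Ioi (x - u)).indicator
          (fun v => ENNReal.ofReal (Real.exp (γ * u)) * ENNReal.ofReal (Real.exp (γ * v))) v := by
    intro v
    have hmem : (u, v) ∈ (fun p : ℝ × ℝ => p.1 + p.2) ⁻¹' Set.Ioi x ↔ v ∈ Set.Ioi (x - u) := by
      simp only [Set.mem_preimage, Set.mem_Ioi]
      constructor <;> intro h <;> linarith
    by_cases hv : v ∈ Set.Ioi (x - u)
    · rw [Set.indicator_of_mem (hmem.2 hv), Set.indicator_of_mem hv,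
        ← ENNReal.ofReal_mul (Real.exp_nonneg _), ← Real.exp_add, mul_add]
    · rw [Set.indicator_of_notMem (fun h => hv (hmem.1 h)), Set.indicator_of_notMem hv]
  simp_rw [h2]
  rw [lintegral_indicator measurableSet_Ioi,
    lintegral_const_mul' _ _ ENNReal.ofReal_ne_top]
  rfl

/-- The tail of the convolution of the tilted measure with itself. -/
private lemma tilt_mconv_tail (F : MeasureTheory.Measure ℝ) [SFinite F] {γ : ℝ}
    (hφ0 : phi F γ ≠ 0) (x : ℝ) :
    tail (mconv (tilt F γ) (tilt F γ)) x
      = (phi F γ)⁻¹ * ((phi F γ)⁻¹ * Sfun (mconv F F) γ x) := by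
  have hmap : Measurable fun p : ℝ × ℝ => p.1 + p.2 := measurable_fst.add measurable_snd
  have hinv_t : (phi F γ)⁻¹ ≠ ⊤ := ENNReal.inv_ne_top.2 hφ0
  have hSm : Measurable fun u : ℝ => Sfun F γ (x - u) :=
    (Sfun_meas F γ).comp (measurable_const.sub measurable_id)
  haveI : SFinite (tilt F γ) := by
    unfold tilt; infer_instance
  rw [Sfun_mconv F γ x]
  unfold tail mconv
  rw [Measure.map_apply hmap measurableSet_Ioi,
    Measure.prod_apply (hmap measurableSet_Ioi)]
  have hpre : ∀ u : ℝ,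
      Prod.mk u ⁻¹' ((fun p : ℝ × ℝ => p.1 + p.2) ⁻¹' Set.Ioi x) = Set.Ioi (x - u) := by
    intro u; ext v
    simp only [Set.mem_preimage, Set.mem_Ioi]
    constructor <;> intro h <;> linarith
  calc ∫⁻ u, (tilt F γ) (Prod.mk u ⁻¹' ((fun p : ℝ × ℝ => p.1 + p.2) ⁻¹' Set.Ioi x)) ∂(tilt F γ)
      = ∫⁻ u, (phi F γ)⁻¹ * Sfun F γ (x - u) ∂(tilt F γ) := by
        refine lintegral_congr fun u => ?_
        rw [hpre u]
        exact tilt_tail F γ (x - u)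
    _ = (phi F γ)⁻¹ * ∫⁻ u, Sfun F γ (x - u) ∂(tilt F γ) :=
        lintegral_const_mul' _ _ hinv_t
    _ = (phi F γ)⁻¹ * ((phi F γ)⁻¹
          * ∫⁻ u, Sfun F γ (x - u)
              ∂(F.withDensity fun u => ENNReal.ofReal (Real.exp (γ * u)))) := by
        unfold tilt
        rw [lintegral_smul_measure, smul_eq_mul]
    _ = (phi F γ)⁻¹ * ((phi F γ)⁻¹
          * ∫⁻ u, ENNReal.ofReal (Real.exp (γ * u)) * Sfun F γ (x - u) ∂F) := by
        rw [lintegral_withDensity_eq_lintegral_mul F (w_meas γ) hSm]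
        rfl

end Stmt9Aux

/-- Lemma 8: liminf and limsup of the convolution ratio under tilting. -/
theorem stmt9 (F : MeasureTheory.Measure ℝ) [MeasureTheory.IsProbabilityMeasure F]
    (hsupp : F (Set.Iio 0) = 0) (hub : ∀ x : ℝ, tail F x ≠ 0)
    (γ : ℝ) (hγ : 0 ≤ γ) (hφ : phi F γ < ⊤) :
    (phi F γ)⁻¹ * liminf (fun x : ℝ => tail (mconv F F) x / tail F x) atTop ≤
      liminf (fun x : ℝ => tail (mconv (tilt F γ) (tilt F γ)) x / tail (tilt F γ) x) atTop
    ∧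
    limsup (fun x : ℝ => tail (mconv (tilt F γ) (tilt F γ)) x / tail (tilt F γ) x) atTop ≤
      (phi F γ)⁻¹ * limsup (fun x : ℝ => tail (mconv F F) x / tail F x) atTop := by
  have hmap : Measurable fun p : ℝ × ℝ => p.1 + p.2 := measurable_fst.add measurable_snd
  rcases hγ.eq_or_lt with h0 | hγpos
  · -- the case γ = 0 : the tilt is trivial
    subst h0
    have hphi : phi F 0 = 1 := by
      simp [phi]
    have htilt : tilt F 0 = F := by
      have hone : (fun u : ℝ => ENNReal.ofReal (Real.exp (0 * u))) = fun _ => (1 : ℝ≥0∞) := by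
        funext u; simp
      unfold tilt
      rw [hphi, inv_one, one_smul, hone]
      exact withDensity_one
    rw [hphi, htilt]
    simp
  -- main case γ > 0
  have hφt : phi F γ ≠ ⊤ := hφ.ne
  have hS_lb : ∀ x : ℝ, ENNReal.ofReal (Real.exp (γ * x)) * tail F x ≤ Sfun F γ x := by
    intro x
    rw [tail, ← setLIntegral_const]
    exact setLIntegral_mono (w_meas γ) fun u hu =>
      ENNReal.ofReal_le_ofReal (Real.exp_le_exp.2 (mul_le_mul_of_nonneg_left hu.le hγ))
  have hS0 : ∀ x : ℝ, Sfun F γ x ≠ 0 := by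
    intro x hx0
    exact mul_ne_zero (ENNReal.ofReal_pos.2 (Real.exp_pos _)).ne' (hub x)
      (le_antisymm (hx0 ▸ hS_lb x) zero_le)
  have hS_le : ∀ x : ℝ, Sfun F γ x ≤ phi F γ := fun x => setLIntegral_le_lintegral _ _
  have hSt : ∀ x : ℝ, Sfun F γ x ≠ ⊤ := fun x => ((hS_le x).trans_lt hφ).ne
  have hφ0 : phi F γ ≠ 0 := fun h => hS0 0 (le_antisymm (h ▸ hS_le 0) zero_le)
  have hinv_t : (phi F γ)⁻¹ ≠ ⊤ := ENNReal.inv_ne_top.2 hφ0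
  have hinv_0 : (phi F γ)⁻¹ ≠ 0 := ENNReal.inv_ne_zero.2 hφt
  haveI hFF : IsProbabilityMeasure (mconv F F) := Measure.isProbabilityMeasure_map hmap.aemeasurable
  have hratio : ∀ x : ℝ,
      tail (mconv (tilt F γ) (tilt F γ)) x / tail (tilt F γ) x
        = (phi F γ)⁻¹ * (Sfun (mconv F F) γ x / Sfun F γ x) := by
    intro x
    rw [tilt_mconv_tail F hφ0 x, tilt_tail F γ x,
      ENNReal.mul_div_mul_left _ _ hinv_0 hinv_t, mul_div_assoc]
  constructor
  · -- liminf bound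
    refine aux_le_of_forall_lt fun c hc => ?_
    have hbL : c * phi F γ < liminf (fun x : ℝ => tail (mconv F F) x / tail F x) atTop := by
      rw [← ENNReal.lt_div_iff_mul_lt (Or.inl hφ0) (Or.inl hφt)]
      rwa [div_eq_mul_inv, mul_comm]
    have hbt : c * phi F γ ≠ ⊤ := hbL.ne_top
    obtain ⟨x₀, hx₀⟩ := eventually_atTop.1 (eventually_lt_of_lt_liminf hbL)
    have htails : ∀ y : ℝ, x₀ ≤ y →
        c * phi F γ * F (Set.Ioi y) ≤ (mconv F F) (Set.Ioi y) := by
      intro y hy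
      exact ((ENNReal.lt_div_iff_mul_lt (Or.inl (hub y)) (Or.inl (measure_ne_top F _))).1
        (hx₀ y hy)).le
    have hev : ∀ᶠ x in atTop,
        c ≤ (phi F γ)⁻¹ * (Sfun (mconv F F) γ x / Sfun F γ x) := by
      refine eventually_atTop.2 ⟨x₀, fun x hx => ?_⟩
      have hTb : c * phi F γ * Sfun F γ x ≤ Sfun (mconv F F) γ x := by
        rw [Sfun_repr F hγpos x, Sfun_repr (mconv F F) hγpos x,
          ← lintegral_const_mul' _ _ hbt]
        exact lintegral_mono fun t => htails _ (hx.trans (le_max_right _ _))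
      have hble : c * phi F γ ≤ Sfun (mconv F F) γ x / Sfun F γ x :=
        (ENNReal.le_div_iff_mul_le (Or.inl (hS0 x)) (Or.inl (hSt x))).2 hTb
      calc c = (phi F γ)⁻¹ * (c * phi F γ) := by
            rw [mul_comm c, ← mul_assoc, ENNReal.inv_mul_cancel hφ0 hφt, one_mul]
        _ ≤ _ := mul_le_mul_right hble _
    exact le_liminf_of_le (by isBoundedDefault)
      (hev.mono fun x hx => by rw [hratio x]; exact hx)
  · -- limsup bound
    refine aux_ge_of_forall_gt fun c hc => ?_
    rcases eq_or_ne c ⊤ with rfl | hct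
    · exact le_top
    have hbt : c * phi F γ ≠ ⊤ := ENNReal.mul_ne_top hct hφt
    have hRb : limsup (fun x : ℝ => tail (mconv F F) x / tail F x) atTop < c * phi F γ := by
      rw [← ENNReal.div_lt_iff (Or.inl hφ0) (Or.inl hφt)]
      rwa [div_eq_mul_inv, mul_comm]
    obtain ⟨x₀, hx₀⟩ := eventually_atTop.1 (eventually_lt_of_limsup_lt hRb)
    have htails : ∀ y : ℝ, x₀ ≤ y →
        (mconv F F) (Set.Ioi y) ≤ c * phi F γ * F (Set.Ioi y) := by
      intro y hy
      exact ((ENNReal.div_lt_iff (Or.inl (hub y)) (Or.inl (measure_ne_top F _))).1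
        (hx₀ y hy)).le
    have hev : ∀ᶠ x in atTop,
        (phi F γ)⁻¹ * (Sfun (mconv F F) γ x / Sfun F γ x) ≤ c := by
      refine eventually_atTop.2 ⟨x₀, fun x hx => ?_⟩
      have hTb : Sfun (mconv F F) γ x ≤ c * phi F γ * Sfun F γ x := by
        rw [Sfun_repr F hγpos x, Sfun_repr (mconv F F) hγpos x,
          ← lintegral_const_mul' _ _ hbt]
        exact lintegral_mono fun t => htails _ (hx.trans (le_max_right _ _))
      have hble : Sfun (mconv F F) γ x / Sfun F γ x ≤ c * phi F γ :=
        ENNReal.div_le_of_le_mul hTb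
      calc (phi F γ)⁻¹ * (Sfun (mconv F F) γ x / Sfun F γ x)
          ≤ (phi F γ)⁻¹ * (c * phi F γ) := mul_le_mul_right hble _
        _ = c := by rw [mul_comm c, ← mul_assoc, ENNReal.inv_mul_cancel hφ0 hφt, one_mul]
    exact limsup_le_of_le (by isBoundedDefault)
      (hev.mono fun x hx => by rw [hratio x]; exact hx)
end
end
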